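/- arXiv:2401.00053 — 6 statements merged into one kernel-verified Lean document; each statement's English description precedes it below -/
import Mathlib

section
/- Let u₀ ∈ ℝ satisfy f₊′(u₀) = f₋′(u₀) and f₊″(u₀) ≠ f₋″(u₀), and set κ₊ = 2·f₊‴(u₀)/(f₊″(u₀)−f₋″(u₀)) and κ₋ = −2·f₋‴(u₀)/(f₊″(u₀)−f₋″(u₀)). Then there is δ > 0 and a function x₁ = x₁(x₂) on (−δ,δ) with x₁(0) = u₀ such that for each x₂ ∈ (−δ,δ)\{0}, x₁(x₂) is the unique solution near u₀ of D₊(x₁,x₂) = 0, and x₁(x₂) = u₀ + x₂ + κ₊·x₂² + O(x₂³) as x₂ → 0. Similarly, the curve D₋(x) = 0 near (u₀,0) is given by a function satisfying x₁(x₂) = u₀ − x₂ + κ₋·x₂² + O(x₂³). Moreover, for small x₂ ≠ 0 the sign of D₊ at points (x₁,x₂) with x₁ to the right of the curve D₊ = 0 coincides with the sign of x₂·(f₊″(u₀)−f₋″(u₀)), and is opposite for x₁ to the left of the curve; the same sign statement holds for D₋ relative to the curve D₋ = 0. -/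
open Set

noncomputable section

/-- `D₊(x) = (f₊'(x₁+x₂) - f₋'(x₁-x₂))/(2x₂) - f₊''(x₁+x₂)`. -/
def Dplus (fp fm : ℝ → ℝ) (x : ℝ × ℝ) : ℝ :=
  (deriv fp (x.1 + x.2) - deriv fm (x.1 - x.2)) / (2 * x.2) - deriv (deriv fp) (x.1 + x.2)

/-- `D₋(x) = (f₊'(x₁+x₂) - f₋'(x₁-x₂))/(2x₂) - f₋''(x₁-x₂)`. -/
def Dminus (fp fm : ℝ → ℝ) (x : ℝ × ℝ) : ℝ :=
  (deriv fp (x.1 + x.2) - deriv fm (x.1 - x.2)) / (2 * x.2) - deriv (deriv fm) (x.1 - x.2)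

private noncomputable def dd (fp fm : ℝ → ℝ) (u₀ : ℝ) : ℝ :=
  deriv (deriv fp) u₀ - deriv (deriv fm) u₀

private noncomputable def FF (fp fm : ℝ → ℝ) (u₀ y s : ℝ) : ℝ :=
  dd fp fm u₀ * (deriv fp (y + s) - deriv fm (y - s) - 2 * s * deriv (deriv fp) (y + s))

private noncomputable def FFy (fp fm : ℝ → ℝ) (u₀ y s : ℝ) : ℝ :=
  dd fp fm u₀ * (deriv (deriv fp) (y + s) - deriv (deriv fm) (y - s)
    - 2 * s * deriv (deriv (deriv fp)) (y + s))

private noncomputable def kk (fp fm : ℝ → ℝ) (u₀ : ℝ) : ℝ :=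
  2 * deriv (deriv (deriv fp)) u₀ / dd fp fm u₀

private noncomputable def PP (fp fm : ℝ → ℝ) (u₀ s : ℝ) : ℝ :=
  u₀ + s + kk fp fm u₀ * s ^ 2

private noncomputable def psipsi (fp fm : ℝ → ℝ) (u₀ s : ℝ) : ℝ :=
  dd fp fm u₀ * (kk fp fm u₀ * (deriv (deriv fp) (PP fp fm u₀ s + s)
      - deriv (deriv fm) (PP fp fm u₀ s - s))
    - (2 + 2 * kk fp fm u₀ * s) * deriv (deriv (deriv fp)) (PP fp fm u₀ s + s))

private lemma contDiff_deriv' {f : ℝ → ℝ} (hf : ContDiff ℝ (⊤:ℕ∞) f) :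
    ContDiff ℝ (⊤:ℕ∞) (deriv f) := (contDiff_infty_iff_deriv.mp hf).2

private lemma Dplus_eq_FF (fp fm : ℝ → ℝ) (u₀ y s : ℝ) (hs : s ≠ 0)
    (hd : dd fp fm u₀ ≠ 0) :
    Dplus fp fm (y, s) = FF fp fm u₀ y s / (2 * s * dd fp fm u₀) := by
  simp only [Dplus, FF]
  field_simp

private lemma Dminus_eq_Dplus (fp fm : ℝ → ℝ) (y s : ℝ) :
    Dminus fp fm (y, s) = Dplus fm fp (y, -s) := by
  simp only [Dminus, Dplus]
  rw [show y + -s = y - s from by ring, show y - -s = y + s from by ring,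
    show (2:ℝ) * -s = -(2*s) from by ring, div_neg]
  ring

private lemma abs_le_abs_of_uIcc {t s : ℝ} (h : t ∈ uIcc 0 s) : |t| ≤ |s| := by
  rw [uIcc_eq_union, mem_union, mem_Icc, mem_Icc] at h
  rcases h with h | h <;>
    · rw [abs_le]; constructor <;> cases abs_cases s <;> linarith [h.1, h.2]

set_option maxHeartbeats 2000000 in
private theorem master (fp fm : ℝ → ℝ) (hfp : ContDiff ℝ (⊤ : ℕ∞) fp) (hfm : ContDiff ℝ (⊤ : ℕ∞) fm) (u₀ : ℝ)
    (h1 : deriv fp u₀ = deriv fm u₀)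
    (h2 : deriv (deriv fp) u₀ ≠ deriv (deriv fm) u₀) :
    ∃ δ > (0:ℝ), ∃ C > (0:ℝ), ∃ g : ℝ → ℝ,
      g 0 = u₀ ∧
      (∀ s : ℝ, s ∈ Set.Ioo (-δ) δ → s ≠ 0 →
        Dplus fp fm (g s, s) = 0 ∧
        (∀ y : ℝ, |y - u₀| < δ → Dplus fp fm (y, s) = 0 → y = g s) ∧
        (∀ y : ℝ, |y - u₀| < δ → g s < y →
          0 < Dplus fp fm (y, s) * (s * (deriv (deriv fp) u₀ - deriv (deriv fm) u₀))) ∧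
        (∀ y : ℝ, |y - u₀| < δ → y < g s →
          Dplus fp fm (y, s) * (s * (deriv (deriv fp) u₀ - deriv (deriv fm) u₀)) < 0)) ∧
      (∀ s ∈ Set.Ioo (-δ) δ,
        |g s - (u₀ + s + (2 * deriv (deriv (deriv fp)) u₀ /
            (deriv (deriv fp) u₀ - deriv (deriv fm) u₀)) * s ^ 2)| ≤ C * |s| ^ 3) := by
  -- differentiability facts
  have Hp : ContDiff ℝ (⊤:ℕ∞) fp := hfp.of_le (by simp)
  have Hm : ContDiff ℝ (⊤:ℕ∞) fm := hfm.of_le (by simp)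
  have H1p := contDiff_deriv' Hp
  have H1m := contDiff_deriv' Hm
  have H2p := contDiff_deriv' H1p
  have H2m := contDiff_deriv' H1m
  have H3p := contDiff_deriv' H2p
  have df1p : Differentiable ℝ (deriv fp) := H1p.differentiable (by simp)
  have df1m : Differentiable ℝ (deriv fm) := H1m.differentiable (by simp)
  have df2p : Differentiable ℝ (deriv (deriv fp)) := H2p.differentiable (by simp)
  have df2m : Differentiable ℝ (deriv (deriv fm)) := H2m.differentiable (by simp)
  have df3p : Differentiable ℝ (deriv (deriv (deriv fp))) := H3p.differentiable (by simp)
  set d := dd fp fm u₀ with hd_def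
  have hdval : d = deriv (deriv fp) u₀ - deriv (deriv fm) u₀ := hd_def
  have hd : d ≠ 0 := sub_ne_zero.mpr h2
  clear_value d
  have hdd : dd fp fm u₀ ≠ 0 := hd_def ▸ hd
  set κ := kk fp fm u₀ with hκ_def
  clear_value κ
  set m := d^2/2 with hm_def
  have hm : 0 < m := by positivity
  clear_value m
  -- derivative of F in y
  have hF : ∀ y s : ℝ, HasDerivAt (fun y => FF fp fm u₀ y s) (FFy fp fm u₀ y s) y := by
    intro y s
    simp only [FF, FFy]
    have A : HasDerivAt (fun y : ℝ => y + s) 1 y := (hasDerivAt_id y).add_const s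
    have B : HasDerivAt (fun y : ℝ => y - s) 1 y := (hasDerivAt_id y).sub_const s
    have e1 : HasDerivAt (fun y => deriv fp (y + s)) (deriv (deriv fp) (y + s)) y := by
      simpa [Function.comp_def] using ((df1p (y + s)).hasDerivAt).comp y A
    have e2 : HasDerivAt (fun y => deriv fm (y - s)) (deriv (deriv fm) (y - s)) y := by
      simpa [Function.comp_def] using ((df1m (y - s)).hasDerivAt).comp y B
    have e3 : HasDerivAt (fun y => deriv (deriv fp) (y + s))
        (deriv (deriv (deriv fp)) (y + s)) y := by
      simpa [Function.comp_def] using ((df2p (y + s)).hasDerivAt).comp y A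
    exact ((e1.sub e2).sub (e3.const_mul (2 * s))).const_mul (dd fp fm u₀)
  -- continuity and lower bound of FFy near (u₀, 0)
  have hFFy0 : FFy fp fm u₀ u₀ 0 = d^2 := by
    simp only [FFy]
    norm_num
    rw [← hd_def, ← hdval]
    ring
  have cFy : Continuous (fun p : ℝ × ℝ => FFy fp fm u₀ p.1 p.2) := by
    have c2p := H2p.continuous
    have c2m := H2m.continuous
    have c3p := H3p.continuous
    simp only [FFy]
    fun_prop
  obtain ⟨δ₀, hδ₀, hball⟩ := Metric.continuousAt_iff.mp cFy.continuousAt m hm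
  have hFy_pos : ∀ y s : ℝ, |y - u₀| < δ₀ → |s| < δ₀ → m < FFy fp fm u₀ y s := by
    intro y s hy hs
    have hdist : dist ((y, s) : ℝ × ℝ) ((u₀, 0) : ℝ × ℝ) < δ₀ := by
      rw [Prod.dist_eq]
      exact max_lt (by simpa [Real.dist_eq] using hy) (by simpa [Real.dist_eq] using hs)
    have hb := hball hdist
    simp only at hb
    rw [Real.dist_eq, hFFy0] at hb
    have h' := (abs_lt.mp hb).1
    have hd2 : d^2 = 2*m := by rw [hm_def]; ring
    linarith
  set r := δ₀ / 2 with hr_def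
  have hr : 0 < r := by positivity
  clear_value r
  -- key monotonicity estimate
  have key : ∀ s : ℝ, |s| < δ₀ → ∀ y1 y2 : ℝ, |y1 - u₀| ≤ r → |y2 - u₀| ≤ r → y1 < y2 →
      m * (y2 - y1) ≤ FF fp fm u₀ y2 s - FF fp fm u₀ y1 s := by
    intro s hs y1 y2 hy1 hy2 h12
    have hcont : ContinuousOn (fun y => FF fp fm u₀ y s) (Icc y1 y2) :=
      fun y _ => ((hF y s).continuousAt).continuousWithinAt
    obtain ⟨c, hc, hslope⟩ := exists_hasDerivAt_eq_slope (fun y => FF fp fm u₀ y s)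
      (fun y => FFy fp fm u₀ y s) h12 hcont (fun x _ => hF x s)
    have hy1' := abs_le.mp hy1
    have hy2' := abs_le.mp hy2
    have hrδ : r < δ₀ := by rw [hr_def]; linarith
    have hcb : |c - u₀| < δ₀ := by
      rw [abs_lt]
      exact ⟨by linarith [hc.1, hy1'.1], by linarith [hc.2, hy2'.2]⟩
    have hpos := hFy_pos c s hcb hs
    rw [hslope] at hpos
    have := (lt_div_iff₀ (by linarith : (0:ℝ) < y2 - y1)).mp hpos
    linarith
  -- uniqueness of zeros
  have uniq : ∀ s : ℝ, |s| < δ₀ → ∀ y1 y2 : ℝ, |y1 - u₀| ≤ r → |y2 - u₀| ≤ r →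
      FF fp fm u₀ y1 s = 0 → FF fp fm u₀ y2 s = 0 → y1 = y2 := by
    intro s hs y1 y2 hy1 hy2 hz1 hz2
    by_contra hne
    rcases Ne.lt_or_gt hne with h | h
    · have hk := key s hs y1 y2 hy1 hy2 h; rw [hz1, hz2] at hk; nlinarith [hm]
    · have hk := key s hs y2 y1 hy2 hy1 h; rw [hz1, hz2] at hk; nlinarith [hm]
  -- existence of zeros via IVT
  have hFu00 : FF fp fm u₀ u₀ 0 = 0 := by
    simp only [FF]
    rw [show u₀ + (0:ℝ) = u₀ from by ring, show u₀ - (0:ℝ) = u₀ from by ring, h1]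
    ring
  have cF0 : Continuous (fun s => FF fp fm u₀ u₀ s) := by
    have c1p := H1p.continuous
    have c1m := H1m.continuous
    have c2p := H2p.continuous
    simp only [FF]
    fun_prop
  obtain ⟨δ₁, hδ₁, hsmall⟩ := Metric.continuousAt_iff.mp cF0.continuousAt (m*r) (by positivity)
  have exu : ∀ s : ℝ, |s| < δ₀ → |s| < δ₁ → ∃ y, |y - u₀| ≤ r ∧ FF fp fm u₀ y s = 0 := by
    intro s hs0 hs1
    have hF0 : |FF fp fm u₀ u₀ s| < m * r := by
      have := hsmall (show dist s 0 < δ₁ by simpa [Real.dist_eq] using hs1)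
      rwa [Real.dist_eq, hFu00, sub_zero] at this
    have hF0' := abs_lt.mp hF0
    have k1 := key s hs0 u₀ (u₀ + r) (by simp [hr.le])
      (by rw [show u₀ + r - u₀ = r from by ring, abs_of_nonneg hr.le]) (by linarith)
    have k2 := key s hs0 (u₀ - r) u₀
      (by rw [show u₀ - r - u₀ = -r from by ring, abs_neg, abs_of_nonneg hr.le]) (by simp [hr.le])
      (by linarith)
    rw [show u₀ + r - u₀ = r from by ring] at k1
    rw [show u₀ - (u₀ - r) = r from by ring] at k2
    have hpos : 0 < FF fp fm u₀ (u₀ + r) s := by nlinarith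
    have hneg : FF fp fm u₀ (u₀ - r) s < 0 := by nlinarith
    have hc : ContinuousOn (fun y => FF fp fm u₀ y s) (Icc (u₀ - r) (u₀ + r)) :=
      fun y _ => ((hF y s).continuousAt).continuousWithinAt
    have hivt := intermediate_value_Icc (by linarith : u₀ - r ≤ u₀ + r) hc
    obtain ⟨y, hy, hFy0⟩ := hivt ⟨hneg.le, hpos.le⟩
    exact ⟨y, by rw [abs_le]; exact ⟨by linarith [hy.1], by linarith [hy.2]⟩, hFy0⟩
  -- derivative of s ↦ FF (PP s) s
  have hPder : ∀ s : ℝ, HasDerivAt (fun t => PP fp fm u₀ t) (1 + κ * (2*s)) s := by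
    intro s
    simp only [PP]
    have := (((hasDerivAt_id s).const_add u₀).add ((hasDerivAt_pow 2 s).const_mul κ))
    rw [← hκ_def]
    simpa [Pi.add_def] using this
  have hhder : ∀ s : ℝ, HasDerivAt (fun t => FF fp fm u₀ (PP fp fm u₀ t) t)
      (2 * s * psipsi fp fm u₀ s) s := by
    intro s
    simp only [FF]
    have hA : HasDerivAt (fun t => PP fp fm u₀ t + t) (2 + 2*κ*s) s := by
      have := (hPder s).add (hasDerivAt_id s)
      exact this.congr_deriv (by ring)
    have hB : HasDerivAt (fun t => PP fp fm u₀ t - t) (2*κ*s) s := by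
      have := (hPder s).sub (hasDerivAt_id s)
      exact this.congr_deriv (by ring)
    have e1 : HasDerivAt (fun t => deriv fp (PP fp fm u₀ t + t))
        (deriv (deriv fp) (PP fp fm u₀ s + s) * (2 + 2*κ*s)) s :=
      ((df1p _).hasDerivAt).comp s hA
    have e2 : HasDerivAt (fun t => deriv fm (PP fp fm u₀ t - t))
        (deriv (deriv fm) (PP fp fm u₀ s - s) * (2*κ*s)) s :=
      ((df1m _).hasDerivAt).comp s hB
    have e3 : HasDerivAt (fun t => deriv (deriv fp) (PP fp fm u₀ t + t))
        (deriv (deriv (deriv fp)) (PP fp fm u₀ s + s) * (2 + 2*κ*s)) s :=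
      ((df2p _).hasDerivAt).comp s hA
    have h2t : HasDerivAt (fun t : ℝ => 2 * t) 2 s := by
      simpa using (hasDerivAt_id s).const_mul (2:ℝ)
    have htotal := ((e1.sub e2).sub (h2t.mul e3)).const_mul (dd fp fm u₀)
    refine htotal.congr_deriv ?_
    simp only [psipsi, ← hd_def, ← hκ_def]
    ring
  -- psi vanishes at 0
  have hP0 : PP fp fm u₀ 0 = u₀ := by simp [PP]
  have hκd : κ * d = 2 * deriv (deriv (deriv fp)) u₀ := by
    rw [hκ_def, hd_def, kk]
    field_simp [show dd fp fm u₀ ≠ 0 from by rw [← hd_def]; exact hd]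
  have hψ0 : psipsi fp fm u₀ 0 = 0 := by
    simp only [psipsi, hP0]
    norm_num
    rw [show deriv (deriv fp) u₀ - deriv (deriv fm) u₀ = dd fp fm u₀ from rfl]
    exact Or.inr (by rw [← hd_def, ← hκ_def]; linear_combination hκd)
  have dψ : DifferentiableAt ℝ (psipsi fp fm u₀) 0 := by
    have dP : Differentiable ℝ (fun t => PP fp fm u₀ t) := fun t => (hPder t).differentiableAt
    have : DifferentiableAt ℝ (fun s => psipsi fp fm u₀ s) 0 := by
      simp only [psipsi]
      fun_prop
    exact this
  have hbigO : (fun s => psipsi fp fm u₀ s) =O[nhds 0] (fun s : ℝ => s) := by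
    have := dψ.isBigO_sub
    simpa [hψ0] using this
  obtain ⟨c, hc, hcbound⟩ := hbigO.exists_pos
  rw [Asymptotics.isBigOWith_iff] at hcbound
  obtain ⟨δ₂, hδ₂, hψb⟩ := Metric.eventually_nhds_iff.mp hcbound
  have hψbound : ∀ t : ℝ, |t| < δ₂ → |psipsi fp fm u₀ t| ≤ c * |t| := by
    intro t ht
    have := hψb (show dist t 0 < δ₂ by simpa [Real.dist_eq] using ht)
    simpa [Real.norm_eq_abs] using this
  have hh0 : FF fp fm u₀ (PP fp fm u₀ 0) 0 = 0 := by rw [hP0]; exact hFu00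
  have bnd : ∀ s : ℝ, |s| < δ₂ → |FF fp fm u₀ (PP fp fm u₀ s) s| ≤ 2*c*|s|^3 := by
    intro s hs
    have conv : Convex ℝ (uIcc (0:ℝ) s) := convex_uIcc _ _
    have hder : ∀ t ∈ uIcc (0:ℝ) s, HasDerivWithinAt (fun t => FF fp fm u₀ (PP fp fm u₀ t) t)
        (2 * t * psipsi fp fm u₀ t) (uIcc (0:ℝ) s) t := fun t _ => (hhder t).hasDerivWithinAt
    have bd : ∀ t ∈ uIcc (0:ℝ) s, ‖2 * t * psipsi fp fm u₀ t‖ ≤ 2*c*s^2 := by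
      intro t ht
      have hts := abs_le_abs_of_uIcc ht
      have hψt := hψbound t (lt_of_le_of_lt hts hs)
      rw [Real.norm_eq_abs, abs_mul, abs_mul, show |(2:ℝ)| = 2 from by norm_num,
        show s^2 = |s|^2 from (sq_abs s).symm]
      have hb1 : |t| * |psipsi fp fm u₀ t| ≤ |t| * (c * |t|) :=
        mul_le_mul_of_nonneg_left hψt (abs_nonneg t)
      have hb2 : |t| * |t| ≤ |s| * |s| := mul_self_le_mul_self (abs_nonneg t) hts
      nlinarith [abs_nonneg t, abs_nonneg s, hc.le]
    have key2 := conv.norm_image_sub_le_of_norm_hasDerivWithin_le hder bd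
      left_mem_uIcc right_mem_uIcc
    simp only [Real.norm_eq_abs, sub_zero] at key2
    rw [hh0, sub_zero] at key2
    calc |FF fp fm u₀ (PP fp fm u₀ s) s| ≤ 2*c*s^2 * |s| := key2
      _ = 2*c*|s|^3 := by rw [show s^2 = |s|^2 from (sq_abs s).symm]; ring
  -- choice of δ
  set δ := min (min δ₀ δ₁) (min δ₂ (min 1 (r / (1 + |κ|)))) with hδ_def
  have hδpos : 0 < δ := by
    have hκr : (0:ℝ) < r / (1 + |κ|) := by positivity
    simp only [hδ_def, lt_min_iff]
    exact ⟨⟨hδ₀, hδ₁⟩, hδ₂, by norm_num, hκr⟩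
  have hδ0' : δ ≤ δ₀ := le_trans (min_le_left _ _) (min_le_left _ _)
  have hδ1' : δ ≤ δ₁ := le_trans (min_le_left _ _) (min_le_right _ _)
  have hδ2' : δ ≤ δ₂ := le_trans (min_le_right _ _) (min_le_left _ _)
  have hδ3' : δ ≤ 1 := le_trans (min_le_right _ _) (le_trans (min_le_right _ _) (min_le_left _ _))
  have hδ4' : δ ≤ r / (1 + |κ|) :=
    le_trans (min_le_right _ _) (le_trans (min_le_right _ _) (min_le_right _ _))
  clear_value δ
  have hδr : δ ≤ r := by
    calc δ ≤ r / (1 + |κ|) := hδ4'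
      _ ≤ r := div_le_self hr.le (by simpa using abs_nonneg κ)
  -- the curve g
  have exug : ∀ s : ℝ, |s| < δ → ∃ y, |y - u₀| ≤ r ∧ FF fp fm u₀ y s = 0 :=
    fun s hs => exu s (lt_of_lt_of_le hs hδ0') (lt_of_lt_of_le hs hδ1')
  have exug' : ∀ s : ℝ, ∃ y, |s| < δ → |y - u₀| ≤ r ∧ FF fp fm u₀ y s = 0 := by
    intro s
    by_cases hs : |s| < δ
    · obtain ⟨y, hy⟩ := exug s hs
      exact ⟨y, fun _ => hy⟩
    · exact ⟨u₀, fun h => absurd h hs⟩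
  choose g gdef using exug' 
  have h0δ : |(0:ℝ)| < δ := by simpa using hδpos
  have hg0 : g 0 = u₀ := by
    obtain ⟨ha, hb⟩ := gdef 0 h0δ
    exact uniq 0 (by simpa using hδ₀) (g 0) u₀ ha (by simp [hr.le]) hb hFu00
  -- sign identity
  have signeq : ∀ y s : ℝ, s ≠ 0 →
      Dplus fp fm (y, s) * (s * (deriv (deriv fp) u₀ - deriv (deriv fm) u₀))
        = FF fp fm u₀ y s / 2 := by
    intro y s hs
    rw [Dplus_eq_FF fp fm u₀ y s hs hdd, ← hd_def, ← hdval]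
    field_simp
  refine ⟨δ, hδpos, 2*c/m + 1, by positivity, g, hg0, ?_, ?_⟩
  · intro s hsIoo hs0
    have hsδ : |s| < δ := abs_lt.mpr ⟨by linarith [hsIoo.1], hsIoo.2⟩
    have hsδ₀ : |s| < δ₀ := lt_of_lt_of_le hsδ hδ0'
    obtain ⟨hgr, hgz⟩ := gdef s hsδ
    refine ⟨?_, ?_, ?_, ?_⟩
    · rw [Dplus_eq_FF fp fm u₀ _ s hs0 hdd, hgz, zero_div]
    · intro y hy hDy
      rw [Dplus_eq_FF fp fm u₀ y s hs0 hdd, div_eq_zero_iff] at hDy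
      have hFy : FF fp fm u₀ y s = 0 := by
        rcases hDy with h | h
        · exact h
        · exfalso
          rw [← hd_def] at h
          exact (mul_ne_zero (mul_ne_zero two_ne_zero hs0) hd) h
      exact uniq s hsδ₀ y (g s) (le_trans hy.le hδr) hgr hFy hgz
    · intro y hy hgy
      have hk := key s hsδ₀ (g s) y hgr (le_trans hy.le hδr) hgy
      rw [hgz, sub_zero] at hk
      rw [signeq y s hs0]
      nlinarith [hm]
    · intro y hy hyg
      have hk := key s hsδ₀ y (g s) (le_trans hy.le hδr) hgr hyg
      rw [hgz, zero_sub] at hk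
      rw [signeq y s hs0]
      nlinarith [hm]
  · intro s hsIoo
    have hsδ : |s| < δ := abs_lt.mpr ⟨by linarith [hsIoo.1], hsIoo.2⟩
    obtain ⟨hgr, hgz⟩ := gdef s hsδ
    rw [show u₀ + s + 2 * deriv (deriv (deriv fp)) u₀ /
        (deriv (deriv fp) u₀ - deriv (deriv fm) u₀) * s ^ 2 = PP fp fm u₀ s from rfl]
    have hPr : |PP fp fm u₀ s - u₀| ≤ r := by
      rw [show PP fp fm u₀ s - u₀ = s + κ * s^2 from by rw [PP, ← hκ_def]; ring]
      have habs1 : |s| ≤ 1 := le_of_lt (lt_of_lt_of_le hsδ hδ3')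
      have habs2 : |s| * (1 + |κ|) ≤ r := by
        have hsle : |s| ≤ r / (1 + |κ|) := le_of_lt (lt_of_lt_of_le hsδ hδ4')
        have := (div_le_iff₀ (by positivity : (0:ℝ) < 1 + |κ|)).mp (le_refl (r / (1 + |κ|)))
        calc |s| * (1 + |κ|) ≤ r / (1 + |κ|) * (1 + |κ|) := by
              apply mul_le_mul_of_nonneg_right hsle (by positivity)
          _ = r := by field_simp
      calc |s + κ * s^2| ≤ |s| + |κ * s^2| := abs_add_le _ _
        _ = |s| + |κ| * |s|^2 := by rw [abs_mul, abs_pow]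
        _ ≤ |s| + |κ| * |s| := by
              have hsq : |s|^2 ≤ |s| := by nlinarith [abs_nonneg s, habs1]
              nlinarith [mul_le_mul_of_nonneg_left hsq (abs_nonneg κ)]
        _ = |s| * (1 + |κ|) := by ring
        _ ≤ r := habs2
    have hb := bnd s (lt_of_lt_of_le hsδ hδ2')
    have hkey3 : m * |g s - PP fp fm u₀ s| ≤ 2*c*|s|^3 := by
      rcases lt_trichotomy (g s) (PP fp fm u₀ s) with h | h | h
      · have hk := key s (lt_of_lt_of_le hsδ hδ0') (g s) (PP fp fm u₀ s) hgr hPr h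
        rw [hgz, sub_zero] at hk
        rw [abs_of_neg (sub_neg.mpr h)]
        have hle := le_abs_self (FF fp fm u₀ (PP fp fm u₀ s) s)
        nlinarith
      · rw [h, sub_self, abs_zero, mul_zero]; positivity
      · have hk := key s (lt_of_lt_of_le hsδ hδ0') (PP fp fm u₀ s) (g s) hPr hgr h
        rw [hgz, zero_sub] at hk
        rw [abs_of_pos (sub_pos.mpr h)]
        have hle := neg_le_abs (FF fp fm u₀ (PP fp fm u₀ s) s)
        nlinarith
    have h3 : (0:ℝ) ≤ |s|^3 := by positivity
    have hfin : |g s - PP fp fm u₀ s| ≤ (2*c/m) * |s|^3 := by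
      rw [div_mul_eq_mul_div, le_div_iff₀ hm]
      nlinarith
    nlinarith [hfin, h3]

/-- Local description of the curves `D₊ = 0` and `D₋ = 0` near a simple root `u₀` of
`f₊' = f₋'`: they are graphs `x₁ = u₀ ± x₂ + κ_± x₂² + O(x₂³)`, and the sign of `D_±` to the
right (resp. left) of the curve `D_± = 0` coincides with (resp. is opposite to) the sign of
`x₂ (f₊''(u₀) - f₋''(u₀))`. -/
theorem curves_D_zero
    (fp fm : ℝ → ℝ) (hfp : ContDiff ℝ (⊤ : ℕ∞) fp) (hfm : ContDiff ℝ (⊤ : ℕ∞) fm) (u₀ : ℝ)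
    (h1 : deriv fp u₀ = deriv fm u₀)
    (h2 : deriv (deriv fp) u₀ ≠ deriv (deriv fm) u₀) :
    ∃ δ > (0:ℝ), ∃ C > (0:ℝ), ∃ gp gm : ℝ → ℝ,
      gp 0 = u₀ ∧ gm 0 = u₀ ∧
      (∀ s : ℝ, s ∈ Set.Ioo (-δ) δ → s ≠ 0 →
        (Dplus fp fm (gp s, s) = 0 ∧
          (∀ y : ℝ, |y - u₀| < δ → Dplus fp fm (y, s) = 0 → y = gp s) ∧
          (∀ y : ℝ, |y - u₀| < δ → gp s < y →
            0 < Dplus fp fm (y, s) * (s * (deriv (deriv fp) u₀ - deriv (deriv fm) u₀))) ∧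
          (∀ y : ℝ, |y - u₀| < δ → y < gp s →
            Dplus fp fm (y, s) * (s * (deriv (deriv fp) u₀ - deriv (deriv fm) u₀)) < 0)) ∧
        (Dminus fp fm (gm s, s) = 0 ∧
          (∀ y : ℝ, |y - u₀| < δ → Dminus fp fm (y, s) = 0 → y = gm s) ∧
          (∀ y : ℝ, |y - u₀| < δ → gm s < y →
            0 < Dminus fp fm (y, s) * (s * (deriv (deriv fp) u₀ - deriv (deriv fm) u₀))) ∧
          (∀ y : ℝ, |y - u₀| < δ → y < gm s →
            Dminus fp fm (y, s) * (s * (deriv (deriv fp) u₀ - deriv (deriv fm) u₀)) < 0))) ∧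
      (∀ s ∈ Set.Ioo (-δ) δ,
        |gp s - (u₀ + s +
          (2 * deriv (deriv (deriv fp)) u₀ /
            (deriv (deriv fp) u₀ - deriv (deriv fm) u₀)) * s ^ 2)| ≤ C * |s| ^ 3 ∧
        |gm s - (u₀ - s +
          (-(2 * deriv (deriv (deriv fm)) u₀) /
            (deriv (deriv fp) u₀ - deriv (deriv fm) u₀)) * s ^ 2)| ≤ C * |s| ^ 3) := by
  obtain ⟨δp, hδp, Cp, hCp, gP, hgP0, hP1, hP2⟩ := master fp fm hfp hfm u₀ h1 h2
  obtain ⟨δm, hδm, Cm, hCm, gM, hgM0, hM1, hM2⟩ := master fm fp hfm hfp u₀ h1.symm (Ne.symm h2)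
  have e1 := min_le_left δp δm
  have e2 := min_le_right δp δm
  refine ⟨min δp δm, lt_min hδp hδm, Cp + Cm, by positivity, gP, fun s => gM (-s),
    hgP0, by simpa using hgM0, ?_, ?_⟩
  · intro s hs hs0
    rw [mem_Ioo] at hs
    have h1p : s ∈ Ioo (-δp) δp := by rw [mem_Ioo]; constructor <;> linarith [hs.1, hs.2]
    have h1m : -s ∈ Ioo (-δm) δm := by rw [mem_Ioo]; constructor <;> linarith [hs.1, hs.2]
    have hs0' : -s ≠ 0 := neg_ne_zero.mpr hs0
    obtain ⟨pa, pb, pc, pd⟩ := hP1 s h1p hs0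
    obtain ⟨ma, mb, mc, md⟩ := hM1 (-s) h1m hs0'
    have hsgn : s * (deriv (deriv fp) u₀ - deriv (deriv fm) u₀)
        = -s * (deriv (deriv fm) u₀ - deriv (deriv fp) u₀) := by ring
    refine ⟨⟨pa, fun y hy hDy => pb y (lt_of_lt_of_le hy e1) hDy,
        fun y hy hgy => pc y (lt_of_lt_of_le hy e1) hgy,
        fun y hy hyg => pd y (lt_of_lt_of_le hy e1) hyg⟩, ?_, ?_, ?_, ?_⟩
    · rw [Dminus_eq_Dplus]; exact ma
    · intro y hy hDy
      refine mb y (lt_of_lt_of_le hy e2) ?_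
      rw [← Dminus_eq_Dplus]; exact hDy
    · intro y hy hgy
      rw [Dminus_eq_Dplus fp fm y s, hsgn]
      exact mc y (lt_of_lt_of_le hy e2) hgy
    · intro y hy hyg
      rw [Dminus_eq_Dplus fp fm y s, hsgn]
      exact md y (lt_of_lt_of_le hy e2) hyg
  · intro s hs
    rw [mem_Ioo] at hs
    have h1p : s ∈ Ioo (-δp) δp := by rw [mem_Ioo]; constructor <;> linarith [hs.1, hs.2]
    have h1m : -s ∈ Ioo (-δm) δm := by rw [mem_Ioo]; constructor <;> linarith [hs.1, hs.2]
    have h3 : (0:ℝ) ≤ |s|^3 := by positivity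
    constructor
    · have hp := hP2 s h1p
      nlinarith [hp]
    · have hM := hM2 (-s) h1m
      have hcoef : 2 * deriv (deriv (deriv fm)) u₀ / (deriv (deriv fm) u₀ - deriv (deriv fp) u₀)
          = -(2 * deriv (deriv (deriv fm)) u₀)
              / (deriv (deriv fp) u₀ - deriv (deriv fm) u₀) := by
        rw [show deriv (deriv fm) u₀ - deriv (deriv fp) u₀
            = -(deriv (deriv fp) u₀ - deriv (deriv fm) u₀) from by ring, div_neg, neg_div]
      rw [hcoef] at hM
      rw [show u₀ + -s + -(2 * deriv (deriv (deriv fm)) u₀)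
            / (deriv (deriv fp) u₀ - deriv (deriv fm) u₀) * (-s) ^ 2
          = u₀ - s + -(2 * deriv (deriv (deriv fm)) u₀)
            / (deriv (deriv fp) u₀ - deriv (deriv fm) u₀) * s ^ 2 from by ring,
        abs_neg] at hM
      nlinarith [hM]
end
end

section
/- Let u₀ ∈ ℝ satisfy f₊′(u₀) = f₋′(u₀) and f₊″(u₀) ≠ f₋″(u₀), and set κ₊ = 2·f₊‴(u₀)/(f₊″(u₀)−f₋″(u₀)), κ₋ = −2·f₋‴(u₀)/(f₊″(u₀)−f₋″(u₀)). Then for all sufficiently small ε > 0: (a) the equation f₊′(u+ε) − f₋′(u−ε) − 2ε·f₊″(u+ε) = 0 has a unique root u₊ in the interval (u₀, u₀+2ε), and u₊ = u₀ + ε + κ₊·ε² + O(ε³) as ε → 0; (b) the equation f₋′(u+ε) − f₊′(u−ε) − 2ε·f₋″(u+ε) = 0 has a unique root u₋ in the interval (u₀, u₀+2ε), and u₋ = u₀ + ε + κ₋·ε² + O(ε³) as ε → 0. -/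
open Set

open scoped ContDiff

noncomputable section

private lemma one_le_inf : (1 : WithTop ℕ∞) ≤ ∞ := by exact_mod_cast le_top

private lemma lip_bound (G : ℝ → ℝ) (hG : ContDiff ℝ ∞ G) :
    ∃ L ≥ (0:ℝ), ∀ x ∈ Icc (-1:ℝ) 1, |G x - G 0| ≤ L * |x| := by
  obtain ⟨L, hL⟩ := (isCompact_Icc (a := (-1:ℝ)) (b := 1)).exists_bound_of_continuousOn
    ((hG.continuous_deriv one_le_inf).continuousOn)
  refine ⟨max L 0, le_max_right _ _, fun x hx => ?_⟩
  have := Convex.norm_image_sub_le_of_norm_deriv_le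
    (f := G) (s := Icc (-1:ℝ) 1) (C := max L 0)
    (fun y _ => (hG.differentiable (by simp)).differentiableAt)
    (fun y hy => le_trans (hL y hy) (le_max_left _ _)) (convex_Icc _ _)
    (show (0:ℝ) ∈ Icc (-1:ℝ) 1 by norm_num) hx
  simpa [Real.norm_eq_abs] using this

private lemma hasD (f : ℝ → ℝ) (hf : ContDiff ℝ ∞ f) (x : ℝ) : HasDerivAt f (deriv f x) x :=
  (hf.differentiable (by simp) x).hasDerivAt

set_option maxHeartbeats 2000000 in
private lemma core (g h : ℝ → ℝ) (hg : ContDiff ℝ ∞ g) (hh : ContDiff ℝ ∞ h) (u₀ : ℝ)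
    (h1 : deriv g u₀ = deriv h u₀)
    (hA : 0 < deriv (deriv g) u₀ - deriv (deriv h) u₀) :
    ∃ ε₁ > (0:ℝ), ∃ C > (0:ℝ), ∃ r : ℝ → ℝ, ∀ ε : ℝ, 0 < ε → ε < ε₁ →
      r ε ∈ Set.Ioo u₀ (u₀ + 2 * ε) ∧
      deriv g (r ε + ε) - deriv h (r ε - ε) - 2 * ε * deriv (deriv g) (r ε + ε) = 0 ∧
      (∀ u ∈ Set.Ioo u₀ (u₀ + 2 * ε),
        deriv g (u + ε) - deriv h (u - ε) - 2 * ε * deriv (deriv g) (u + ε) = 0 → u = r ε) ∧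
      |r ε - (u₀ + ε + (2 * deriv (deriv (deriv g)) u₀ /
          (deriv (deriv g) u₀ - deriv (deriv h) u₀)) * ε ^ 2)| ≤ C * ε ^ 3 := by
  have hp : ContDiff ℝ ∞ (deriv g) := (contDiff_infty_iff_deriv.mp hg).2
  have hq : ContDiff ℝ ∞ (deriv h) := (contDiff_infty_iff_deriv.mp hh).2
  have hp1 : ContDiff ℝ ∞ (deriv (deriv g)) := (contDiff_infty_iff_deriv.mp hp).2
  have hq1 : ContDiff ℝ ∞ (deriv (deriv h)) := (contDiff_infty_iff_deriv.mp hq).2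
  have hp2 : ContDiff ℝ ∞ (deriv (deriv (deriv g))) := (contDiff_infty_iff_deriv.mp hp1).2
  set p := deriv g with hpdef
  set q := deriv h with hqdef
  set p1 := deriv p with hp1def
  set q1 := deriv q with hq1def
  set p2 := deriv p1 with hp2def
  set A := p1 u₀ - q1 u₀ with hAdef
  set κ := 2 * p2 u₀ / A with hκdef
  have hAne : A ≠ 0 := ne_of_gt hA
  have hAne' : p1 u₀ - q1 u₀ ≠ 0 := by rw [← hAdef]; exact hAne
  clear_value κ A
  -- derivative in u of F(·, ε)
  set Φ : ℝ → ℝ → ℝ := fun u ε => p1 (u + ε) - q1 (u - ε) - 2 * ε * p2 (u + ε) with hΦdef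
  have hΦu : ∀ (ε u : ℝ),
      HasDerivAt (fun u => p (u + ε) - q (u - ε) - 2 * ε * p1 (u + ε)) (Φ u ε) u := by
    intro ε u
    have h1' : HasDerivAt (fun u : ℝ => p (u + ε)) (p1 (u + ε)) u := by
      exact ((hasD p hp (u + ε)).comp u ((hasDerivAt_id u).add_const ε)).congr_deriv (by simp [hp1def] : _ = p1 (u + ε))
    have h2' : HasDerivAt (fun u : ℝ => q (u - ε)) (q1 (u - ε)) u := by
      exact ((hasD q hq (u - ε)).comp u ((hasDerivAt_id u).sub_const ε)).congr_deriv (by simp [hq1def] : _ = q1 (u - ε))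
    have h3' : HasDerivAt (fun u : ℝ => 2 * ε * p1 (u + ε)) (2 * ε * p2 (u + ε)) u := by
      have := (hasD p1 hp1 (u + ε)).comp u ((hasDerivAt_id u).add_const ε)
      simpa using this.const_mul (2 * ε)
    exact (h1'.sub h2').sub h3'
  -- continuity neighborhood for Φ
  obtain ⟨δ₁, hδ₁pos, hδ₁⟩ : ∃ δ > (0:ℝ), ∀ u ε : ℝ, |u - u₀| < δ → |ε| < δ → A / 2 < Φ u ε := by
    have hc : ContinuousAt (fun x : ℝ × ℝ => Φ x.1 x.2) (u₀, 0) := by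
      apply Continuous.continuousAt
      apply Continuous.sub
      · exact (hp1.continuous.comp (continuous_fst.add continuous_snd)).sub
          (hq1.continuous.comp (continuous_fst.sub continuous_snd))
      · exact (continuous_const.mul continuous_snd).mul
          (hp2.continuous.comp (continuous_fst.add continuous_snd))
    have hval : Φ u₀ 0 = A := by simp [hΦdef, hAdef]
    obtain ⟨δ, hδpos, hδ⟩ := Metric.continuousAt_iff.mp hc (A / 2) (by linarith)
    refine ⟨δ, hδpos, fun u ε hu hε => ?_⟩
    have hd : dist ((u, ε) : ℝ × ℝ) (u₀, 0) < δ := by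
      rw [Prod.dist_eq]
      simp only [Real.dist_eq, sub_zero]
      exact max_lt hu hε
    have := hδ hd
    simp only [hval, Real.dist_eq] at this
    have := abs_lt.mp this
    linarith [this.1]
  -- boundary function at u₀
  set φ : ℝ → ℝ := fun ε => p (u₀ + ε) - q (u₀ - ε) - 2 * ε * p1 (u₀ + ε) with hφdef
  set φd : ℝ → ℝ := fun ε => q1 (u₀ - ε) - p1 (u₀ + ε) - 2 * ε * p2 (u₀ + ε) with hφddef
  have hφ0 : φ 0 = 0 := by simp [hφdef, h1]
  have hφd : ∀ ε, HasDerivAt φ (φd ε) ε := by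
    intro ε
    have h1' : HasDerivAt (fun ε : ℝ => p (u₀ + ε)) (p1 (u₀ + ε)) ε := by
      exact ((hasD p hp (u₀ + ε)).comp ε ((hasDerivAt_id ε).const_add u₀)).congr_deriv (by simp [hp1def])
    have h2' : HasDerivAt (fun ε : ℝ => q (u₀ - ε)) (-q1 (u₀ - ε)) ε := by
      have := (hasD q hq (u₀ - ε)).comp ε ((hasDerivAt_id ε).neg.const_add u₀)
      exact this.congr_deriv (by simp [hq1def])
    have h3' : HasDerivAt (fun ε : ℝ => 2 * ε * p1 (u₀ + ε))
        (2 * p1 (u₀ + ε) + 2 * ε * p2 (u₀ + ε)) ε := by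
      have hin : HasDerivAt (fun ε : ℝ => p1 (u₀ + ε)) (p2 (u₀ + ε)) ε := by
        exact ((hasD p1 hp1 (u₀ + ε)).comp ε ((hasDerivAt_id ε).const_add u₀)).congr_deriv (by simp [hp2def])
      have hmul : HasDerivAt (fun ε : ℝ => 2 * ε) 2 ε := by
        simpa using (hasDerivAt_id ε).const_mul 2
      have := hmul.mul hin
      exact this.congr_deriv (by ring)
    have := (h1'.sub h2').sub h3'
    exact this.congr_deriv (by simp only [hφddef]; ring)
  obtain ⟨δ₂, hδ₂pos, hδ₂⟩ : ∃ δ > (0:ℝ), ∀ ε : ℝ, |ε| < δ → φd ε < -(A / 2) := by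
    have hc : ContinuousAt φd 0 := by
      apply Continuous.continuousAt
      apply Continuous.sub
      · exact (hq1.continuous.comp (continuous_const.sub continuous_id)).sub
          (hp1.continuous.comp (continuous_const.add continuous_id))
      · exact (continuous_const.mul continuous_id).mul
          (hp2.continuous.comp (continuous_const.add continuous_id))
    have hval : φd 0 = -A := by simp [hφddef, hAdef]; try ring
    obtain ⟨δ, hδpos, hδ⟩ := Metric.continuousAt_iff.mp hc (A / 2) (by linarith)
    refine ⟨δ, hδpos, fun ε hε => ?_⟩
    have := hδ (by simpa [Real.dist_eq] using hε)
    rw [hval, Real.dist_eq] at this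
    have := abs_lt.mp this
    linarith [this.2]
  -- boundary function at u₀ + 2ε
  set ψ : ℝ → ℝ := fun ε => p (u₀ + 3 * ε) - q (u₀ + ε) - 2 * ε * p1 (u₀ + 3 * ε) with hψdef
  set ψd : ℝ → ℝ := fun ε => p1 (u₀ + 3 * ε) - q1 (u₀ + ε) - 6 * ε * p2 (u₀ + 3 * ε) with hψddef
  have hψ0 : ψ 0 = 0 := by simp [hψdef, h1]
  have hψd : ∀ ε, HasDerivAt ψ (ψd ε) ε := by
    intro ε
    have hin3 : HasDerivAt (fun ε : ℝ => u₀ + 3 * ε) 3 ε := by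
      simpa using ((hasDerivAt_id ε).const_mul 3).const_add u₀
    have h1' : HasDerivAt (fun ε : ℝ => p (u₀ + 3 * ε)) (p (u₀+3*ε) * 0 + 3 * p1 (u₀ + 3 * ε)) ε := by
      have := (hasD p hp (u₀ + 3 * ε)).comp ε hin3
      exact this.congr_deriv (by rw [hp1def]; ring)
    have h2' : HasDerivAt (fun ε : ℝ => q (u₀ + ε)) (q1 (u₀ + ε)) ε := by
      exact ((hasD q hq (u₀ + ε)).comp ε ((hasDerivAt_id ε).const_add u₀)).congr_deriv (by simp [hq1def])
    have h3' : HasDerivAt (fun ε : ℝ => 2 * ε * p1 (u₀ + 3 * ε))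
        (2 * p1 (u₀ + 3 * ε) + 6 * ε * p2 (u₀ + 3 * ε)) ε := by
      have hin : HasDerivAt (fun ε : ℝ => p1 (u₀ + 3 * ε)) (3 * p2 (u₀ + 3 * ε)) ε := by
        have := (hasD p1 hp1 (u₀ + 3 * ε)).comp ε hin3
        exact this.congr_deriv (by rw [hp2def]; ring)
      have hmul : HasDerivAt (fun ε : ℝ => 2 * ε) 2 ε := by
        simpa using (hasDerivAt_id ε).const_mul 2
      have := hmul.mul hin
      exact this.congr_deriv (by ring)
    have := (h1'.sub h2').sub h3'
    exact this.congr_deriv (by simp only [hψddef]; ring)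
  obtain ⟨δ₃, hδ₃pos, hδ₃⟩ : ∃ δ > (0:ℝ), ∀ ε : ℝ, |ε| < δ → A / 2 < ψd ε := by
    have hc : ContinuousAt ψd 0 := by
      apply Continuous.continuousAt
      apply Continuous.sub
      · exact (hp1.continuous.comp (continuous_const.add (continuous_const.mul continuous_id))).sub
          (hq1.continuous.comp (continuous_const.add continuous_id))
      · exact (continuous_const.mul continuous_id).mul
          (hp2.continuous.comp (continuous_const.add (continuous_const.mul continuous_id)))
    have hval : ψd 0 = A := by simp [hψddef, hAdef]
    obtain ⟨δ, hδpos, hδ⟩ := Metric.continuousAt_iff.mp hc (A / 2) (by linarith)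
    refine ⟨δ, hδpos, fun ε hε => ?_⟩
    have := hδ (by simpa [Real.dist_eq] using hε)
    rw [hval, Real.dist_eq] at this
    have := abs_lt.mp this
    linarith [this.1]
  -- the function η along the approximate root curve
  set η : ℝ → ℝ := fun ε => p (u₀ + 2 * ε + κ * ε ^ 2) - q (u₀ + κ * ε ^ 2)
      - 2 * ε * p1 (u₀ + 2 * ε + κ * ε ^ 2) with hηdef
  set ρ : ℝ → ℝ := fun ε => κ * (p1 (u₀ + 2 * ε + κ * ε ^ 2) - q1 (u₀ + κ * ε ^ 2))
      - (2 + 2 * κ * ε) * p2 (u₀ + 2 * ε + κ * ε ^ 2) with hρdef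
  have hη0 : η 0 = 0 := by simp [hηdef, h1]
  have hρ0 : ρ 0 = 0 := by
    simp only [hρdef, mul_zero, zero_pow, add_zero, mul_one, ne_eq, OfNat.ofNat_ne_zero,
      not_false_eq_true, pow_eq_zero_iff]
    rw [hκdef, hAdef]
    field_simp
    ring
  have hρsmooth : ContDiff ℝ ∞ ρ := by
    have ha : ContDiff ℝ ∞ (fun ε : ℝ => u₀ + 2 * ε + κ * ε ^ 2) := by fun_prop
    have hb : ContDiff ℝ ∞ (fun ε : ℝ => u₀ + κ * ε ^ 2) := by fun_prop
    exact ((contDiff_const.mul ((hp1.comp ha).sub (hq1.comp hb)))).sub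
      ((contDiff_const.add (contDiff_const.mul contDiff_id)).mul (hp2.comp ha))
  have hηd : ∀ ε, HasDerivAt η (2 * ε * ρ ε) ε := by
    intro ε
    have hain : HasDerivAt (fun ε : ℝ => u₀ + 2 * ε + κ * ε ^ 2) (2 + 2 * κ * ε) ε := by
      have := (((hasDerivAt_id ε).const_mul 2).const_add u₀).add ((hasDerivAt_pow 2 ε).const_mul κ)
      exact this.congr_deriv (by push_cast; ring)
    have hbin : HasDerivAt (fun ε : ℝ => u₀ + κ * ε ^ 2) (2 * κ * ε) ε := by
      have := ((hasDerivAt_pow 2 ε).const_mul κ).const_add u₀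
      exact this.congr_deriv (by push_cast; ring)
    have h1' : HasDerivAt (fun ε : ℝ => p (u₀ + 2 * ε + κ * ε ^ 2))
        ((2 + 2 * κ * ε) * p1 (u₀ + 2 * ε + κ * ε ^ 2)) ε := by
      have := (hasD p hp _).comp ε hain
      exact this.congr_deriv (by rw [hp1def]; ring)
    have h2' : HasDerivAt (fun ε : ℝ => q (u₀ + κ * ε ^ 2))
        (2 * κ * ε * q1 (u₀ + κ * ε ^ 2)) ε := by
      have := (hasD q hq _).comp ε hbin
      exact this.congr_deriv (by rw [hq1def]; ring)
    have h3' : HasDerivAt (fun ε : ℝ => 2 * ε * p1 (u₀ + 2 * ε + κ * ε ^ 2))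
        (2 * p1 (u₀ + 2 * ε + κ * ε ^ 2)
          + 2 * ε * ((2 + 2 * κ * ε) * p2 (u₀ + 2 * ε + κ * ε ^ 2))) ε := by
      have hin : HasDerivAt (fun ε : ℝ => p1 (u₀ + 2 * ε + κ * ε ^ 2))
          ((2 + 2 * κ * ε) * p2 (u₀ + 2 * ε + κ * ε ^ 2)) ε := by
        have := (hasD p1 hp1 _).comp ε hain
        exact this.congr_deriv (by rw [hp2def]; ring)
      have hmul : HasDerivAt (fun ε : ℝ => 2 * ε) 2 ε := by
        simpa using (hasDerivAt_id ε).const_mul 2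
      have := hmul.mul hin
      exact this.congr_deriv (by ring)
    have := (h1'.sub h2').sub h3'
    exact this.congr_deriv (by simp only [hρdef]; ring)
  obtain ⟨L, hLnn, hL⟩ := lip_bound ρ hρsmooth
  -- the |η ε| ≤ 2 L ε³ bound, for 0 < ε ≤ 1
  have hηbound : ∀ ε : ℝ, 0 < ε → ε ≤ 1 → |η ε| ≤ 2 * L * ε ^ 3 := by
    intro ε hε hε1
    obtain ⟨c, hc, hslope⟩ := exists_hasDerivAt_eq_slope η (fun x => 2 * x * ρ x) hε
      (fun x _ => (hηd x).continuousAt.continuousWithinAt) (fun x _ => hηd x)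
    rw [hη0, sub_zero, sub_zero] at hslope
    have hηε : η ε = 2 * c * ρ c * ε := by
      field_simp at hslope
      linarith [hslope]
    have hcmem : c ∈ Icc (-1:ℝ) 1 := ⟨by linarith [hc.1], by linarith [hc.2, hε1]⟩
    have hρc : |ρ c| ≤ L * |c| := by simpa [hρ0] using hL c hcmem
    have hcpos : 0 < c := hc.1
    have hcabs : |c| = c := abs_of_pos hcpos
    rw [hηε]
    have : |2 * c * ρ c * ε| = 2 * c * |ρ c| * ε := by
      rw [abs_mul, abs_mul, abs_mul]
      rw [abs_of_pos hε, hcabs, abs_of_nonneg (by norm_num : (0:ℝ) ≤ 2)]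
    rw [this]
    have hρc' : |ρ c| ≤ L * c := by rwa [hcabs] at hρc
    have hcε : c ≤ ε := le_of_lt hc.2
    calc 2 * c * |ρ c| * ε ≤ 2 * c * (L * c) * ε := by
          nlinarith [mul_le_mul_of_nonneg_left hρc' (le_of_lt (by positivity : (0:ℝ) < 2 * c * ε))]
      _ = 2 * L * (c ^ 2) * ε := by ring
      _ ≤ 2 * L * (ε ^ 2) * ε := by
          have h2 : c ^ 2 ≤ ε ^ 2 := by nlinarith
          have h3 := mul_le_mul_of_nonneg_left h2 (show (0:ℝ) ≤ 2 * L * ε by positivity)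
          nlinarith [h3]
      _ = 2 * L * ε ^ 3 := by ring
  -- choose ε₁ and C
  set ε₁ : ℝ := min (min 1 (δ₁ / (3 + |κ|))) (min δ₂ δ₃) with hε₁def
  have hε₁pos : 0 < ε₁ :=
    lt_min (lt_min one_pos (div_pos hδ₁pos (by positivity))) (lt_min hδ₂pos hδ₃pos)
  set C : ℝ := 4 * L / A + 1 with hCdef
  have hCpos : 0 < C := by
    rw [hCdef]
    have h4 : 0 ≤ 4 * L / A := div_nonneg (by linarith only [hLnn]) hA.le
    linarith only [h4]
  have main : ∀ ε : ℝ, ∃ u : ℝ, 0 < ε → ε < ε₁ →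
      u ∈ Set.Ioo u₀ (u₀ + 2 * ε) ∧
      p (u + ε) - q (u - ε) - 2 * ε * p1 (u + ε) = 0 ∧
      (∀ v ∈ Set.Ioo u₀ (u₀ + 2 * ε),
        p (v + ε) - q (v - ε) - 2 * ε * p1 (v + ε) = 0 → v = u) ∧
      |u - (u₀ + ε + κ * ε ^ 2)| ≤ C * ε ^ 3 := by
    intro ε
    by_cases hcond : 0 < ε ∧ ε < ε₁
    swap
    · exact ⟨u₀, fun ha hb => absurd ⟨ha, hb⟩ hcond⟩
    obtain ⟨hε, hεε₁⟩ := hcond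
    -- basic size facts
    have hεle1 : ε ≤ 1 := le_of_lt (lt_of_lt_of_le hεε₁ ((min_le_left _ _).trans (min_le_left _ _)))
    have hεδ1' : ε < δ₁ / (3 + |κ|) :=
      lt_of_lt_of_le hεε₁ ((min_le_left _ _).trans (min_le_right _ _))
    have hεδ2 : ε < δ₂ := lt_of_lt_of_le hεε₁ ((min_le_right _ _).trans (min_le_left _ _))
    have hεδ3 : ε < δ₃ := lt_of_lt_of_le hεε₁ ((min_le_right _ _).trans (min_le_right _ _))
    have hmul : ε * (3 + |κ|) < δ₁ := (lt_div_iff₀ (by positivity)).mp hεδ1'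
    rw [show ε * (3 + |κ|) = 3 * ε + |κ| * ε from by ring] at hmul
    have hκε : 0 ≤ |κ| * ε := mul_nonneg (abs_nonneg κ) hε.le
    have h2εδ1 : 2 * ε < δ₁ := by linarith only [hmul, hκε, hε]
    have hεδ1 : ε < δ₁ := by linarith only [hmul, hκε, hε]
    have hmdist : |ε + κ * ε ^ 2| < δ₁ := by
      have h1' : |ε + κ * ε ^ 2| ≤ ε + |κ| * ε ^ 2 := by
        calc |ε + κ * ε ^ 2| ≤ |ε| + |κ * ε ^ 2| := abs_add_le _ _
          _ = ε + |κ| * ε ^ 2 := by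
              rw [abs_of_pos hε, abs_mul, abs_pow, abs_of_pos hε]
      have hsq : |κ| * ε ^ 2 ≤ |κ| * ε := by
        have h2 : ε ^ 2 ≤ ε := by
          rw [pow_two]
          have := mul_le_mul_of_nonneg_left hεle1 hε.le
          simpa using this
        exact mul_le_mul_of_nonneg_left h2 (abs_nonneg κ)
      linarith only [h1', hsq, hmul, hε]
    -- fixed-ε section function and its monotonicity
    set F : ℝ → ℝ := fun u => p (u + ε) - q (u - ε) - 2 * ε * p1 (u + ε) with hFdef
    have hFcont : ∀ s : Set ℝ, ContinuousOn F s :=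
      fun s x _ => (hΦu ε x).continuousAt.continuousWithinAt
    have hmono : StrictMonoOn F (Icc u₀ (u₀ + 2 * ε)) := by
      apply strictMonoOn_of_deriv_pos (convex_Icc _ _) (hFcont _)
      intro x hx
      rw [interior_Icc] at hx
      rw [(hΦu ε x).deriv]
      have hxd : |x - u₀| < δ₁ := abs_lt.mpr
        ⟨by linarith only [hx.1, hδ₁pos], by linarith only [hx.2, h2εδ1]⟩
      exact lt_trans (half_pos hA) (hδ₁ x ε hxd (by rwa [abs_of_pos hε]))
    -- boundary signs
    have hFa : F u₀ < 0 := by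
      obtain ⟨c, hc, hslope⟩ := exists_hasDerivAt_eq_slope φ φd hε
        (fun x _ => (hφd x).continuousAt.continuousWithinAt) (fun x _ => hφd x)
      rw [hφ0, sub_zero, sub_zero, eq_div_iff (ne_of_gt hε)] at hslope
      have hφdc : φd c < -(A / 2) := hδ₂ c (by
        rw [abs_of_pos hc.1]; linarith only [hc.2, hεδ2])
      have hFφ : F u₀ = φ ε := rfl
      rw [hFφ, ← hslope]
      exact mul_neg_of_neg_of_pos
        (lt_trans hφdc (neg_lt_zero.mpr (half_pos hA))) hε
    have hFb : 0 < F (u₀ + 2 * ε) := by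
      obtain ⟨c, hc, hslope⟩ := exists_hasDerivAt_eq_slope ψ ψd hε
        (fun x _ => (hψd x).continuousAt.continuousWithinAt) (fun x _ => hψd x)
      rw [hψ0, sub_zero, sub_zero, eq_div_iff (ne_of_gt hε)] at hslope
      have hψdc : A / 2 < ψd c := hδ₃ c (by
        rw [abs_of_pos hc.1]; linarith only [hc.2, hεδ3])
      have hFψ : F (u₀ + 2 * ε) = ψ ε := by
        show p (u₀ + 2 * ε + ε) - q (u₀ + 2 * ε - ε) - 2 * ε * p1 (u₀ + 2 * ε + ε) = _
        rw [show u₀ + 2 * ε + ε = u₀ + 3 * ε from by ring,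
          show u₀ + 2 * ε - ε = u₀ + ε from by ring]
      rw [hFψ, ← hslope]
      exact mul_pos (lt_trans (half_pos hA) hψdc) hε
    -- existence of the root
    have h0mem : (0:ℝ) ∈ Ioo (F u₀) (F (u₀ + 2 * ε)) := ⟨hFa, hFb⟩
    obtain ⟨u, humem, hFu⟩ := intermediate_value_Ioo
      (by linarith only [hε] : u₀ ≤ u₀ + 2 * ε) (hFcont _) h0mem
    refine ⟨u, fun _ _ => ⟨humem, hFu, ?_, ?_⟩⟩
    · intro v hv hFv
      exact hmono.injOn (Ioo_subset_Icc_self hv) (Ioo_subset_Icc_self humem)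
        (hFv.trans hFu.symm)
    -- the asymptotic bound
    · set m : ℝ := u₀ + ε + κ * ε ^ 2 with hmdef
      have hFm : F m = η ε := by
        show p (u₀ + ε + κ * ε ^ 2 + ε) - q (u₀ + ε + κ * ε ^ 2 - ε)
          - 2 * ε * p1 (u₀ + ε + κ * ε ^ 2 + ε) = _
        rw [show u₀ + ε + κ * ε ^ 2 + ε = u₀ + 2 * ε + κ * ε ^ 2 from by ring,
          show u₀ + ε + κ * ε ^ 2 - ε = u₀ + κ * ε ^ 2 from by ring]
      by_cases hum : u = m
      · rw [hum, sub_self, abs_zero]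
        exact le_of_lt (mul_pos hCpos (pow_pos hε 3))
      have hxy : min u m < max u m := min_lt_max.mpr hum
      obtain ⟨c, hcmem, hcslope⟩ := exists_hasDerivAt_eq_slope F (fun z => Φ z ε) hxy
        (hFcont _) (fun z _ => hΦu ε z)
      rw [eq_div_iff (ne_of_gt (by linarith only [hxy] : (0:ℝ) < max u m - min u m))]
        at hcslope
      have hub : u₀ - δ₁ < u ∧ u < u₀ + δ₁ :=
        ⟨by linarith only [humem.1, hδ₁pos], by linarith only [humem.2, h2εδ1]⟩
      have hmb : u₀ - δ₁ < m ∧ m < u₀ + δ₁ := by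
        have hmu : m - u₀ = ε + κ * ε ^ 2 := by rw [hmdef]; ring
        have h' := abs_lt.mp (by rw [← hmu] at hmdist; exact hmdist)
        exact ⟨by linarith only [h'.1], by linarith only [h'.2]⟩
      have hcb : |c - u₀| < δ₁ := by
        have h1' : u₀ - δ₁ < min u m := lt_min hub.1 hmb.1
        have h2' : max u m < u₀ + δ₁ := max_lt hub.2 hmb.2
        exact abs_lt.mpr ⟨by linarith only [hcmem.1, h1'], by linarith only [hcmem.2, h2']⟩
      have hΦc : A / 2 < Φ c ε := hδ₁ c ε hcb (by rwa [abs_of_pos hε])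
      have hlow : A / 2 * (max u m - min u m) ≤ F (max u m) - F (min u m) :=
        (mul_le_mul_of_nonneg_right hΦc.le
          (by linarith only [hxy] : (0:ℝ) ≤ max u m - min u m)).trans_eq hcslope
      have hdiff : F (max u m) - F (min u m) ≤ |η ε| := by
        rcases le_total u m with hle | hle
        · rw [min_eq_left hle, max_eq_right hle, hFu, hFm, sub_zero]
          exact le_abs_self _
        · rw [min_eq_right hle, max_eq_left hle, hFu, hFm, zero_sub]
          exact neg_le_abs _
      have hηb := hηbound ε hε hεle1
      have hms : max u m - min u m = |u - m| := by
        rw [max_sub_min_eq_abs u m, abs_sub_comm]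
      have hkey : A / 2 * |u - m| ≤ 2 * L * ε ^ 3 := by
        rw [← hms]; exact hlow.trans (hdiff.trans hηb)
      have hb1 : A * |u - m| ≤ 4 * L * ε ^ 3 := by
        rw [show A * |u - m| = 2 * (A / 2 * |u - m|) from by ring,
          show (4:ℝ) * L * ε ^ 3 = 2 * (2 * L * ε ^ 3) from by ring]
        exact mul_le_mul_of_nonneg_left hkey (by norm_num)
      have hAC : A * C = 4 * L + A := by
        rw [hCdef]; field_simp
      have hb3 : A * |u - m| ≤ A * (C * ε ^ 3) := by
        have hp3 : 0 < A * ε ^ 3 := mul_pos hA (pow_pos hε 3)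
        rw [show A * (C * ε ^ 3) = A * C * ε ^ 3 from by ring, hAC,
          show (4 * L + A) * ε ^ 3 = 4 * L * ε ^ 3 + A * ε ^ 3 from by ring]
        linarith only [hb1, hp3]
      exact le_of_mul_le_mul_left hb3 hA
  choose r hr using main
  exact ⟨ε₁, hε₁pos, C, hCpos, r, fun ε hε hεε₁ => hr ε hε hεε₁⟩

private lemma neg_div_helper (a b c : ℝ) : 2 * -a / (-b - -c) = 2 * a / (b - c) := by
  rw [show (-b - -c) = -(b - c) from by ring, show 2 * -a = -(2 * a) from by ring,
    neg_div_neg_eq]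

set_option maxHeartbeats 1000000 in
private lemma core' (g h : ℝ → ℝ) (hg : ContDiff ℝ ∞ g) (hh : ContDiff ℝ ∞ h) (u₀ : ℝ)
    (h1 : deriv g u₀ = deriv h u₀)
    (hA : deriv (deriv g) u₀ ≠ deriv (deriv h) u₀) :
    ∃ ε₁ > (0:ℝ), ∃ C > (0:ℝ), ∃ r : ℝ → ℝ, ∀ ε : ℝ, 0 < ε → ε < ε₁ →
      r ε ∈ Set.Ioo u₀ (u₀ + 2 * ε) ∧
      deriv g (r ε + ε) - deriv h (r ε - ε) - 2 * ε * deriv (deriv g) (r ε + ε) = 0 ∧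
      (∀ u ∈ Set.Ioo u₀ (u₀ + 2 * ε),
        deriv g (u + ε) - deriv h (u - ε) - 2 * ε * deriv (deriv g) (u + ε) = 0 → u = r ε) ∧
      |r ε - (u₀ + ε + (2 * deriv (deriv (deriv g)) u₀ /
          (deriv (deriv g) u₀ - deriv (deriv h) u₀)) * ε ^ 2)| ≤ C * ε ^ 3 := by
  rcases lt_or_gt_of_ne hA with hlt | hgt
  · -- apply core to (-g, -h)
    have e1 : deriv (fun x => -g x) = fun x => -deriv g x := funext fun x => deriv.neg
    have e1h : deriv (fun x => -h x) = fun x => -deriv h x := funext fun x => deriv.neg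
    have e2 : (deriv fun x => -deriv g x) = fun x => -deriv (deriv g) x :=
      funext fun x => deriv.neg
    have e2h : (deriv fun x => -deriv h x) = fun x => -deriv (deriv h) x :=
      funext fun x => deriv.neg
    have e3 : deriv (fun x => -deriv (deriv g) x) = fun x => -deriv (deriv (deriv g)) x :=
      funext fun x => deriv.neg
    obtain ⟨ε₁, hε₁, C, hC, r, hr⟩ := core (fun x => -g x) (fun x => -h x) hg.neg hh.neg u₀
      (by simp only [e1, e1h]; rw [h1])
      (by simp only [e1, e1h, e2, e2h]; linarith)
    refine ⟨ε₁, hε₁, C, hC, r, fun ε hε hεε₁ => ?_⟩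
    obtain ⟨hmem, heq, huniq, hbound⟩ := hr ε hε hεε₁
    simp only [e1, e1h, e2] at heq
    simp only [e1, e1h, e2, e2h, e3, neg_div_helper] at hbound
    refine ⟨hmem, by linear_combination -heq, fun v hv hveq => ?_, hbound⟩
    apply huniq v hv
    simp only [e1, e1h, e2]
    linear_combination -hveq
  · exact core g h hg hh u₀ h1 (sub_pos.mpr hgt)

noncomputable section

/-- Existence, uniqueness and asymptotics of the roots `u₊` of `D₊(u, ε) = 0` and `u₋` of
`D₋(u, -ε) = 0` in `(u₀, u₀ + 2ε)` for small `ε` (Corollary 5.4 of the paper). -/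
theorem roots_u_plus_minus
    (fp fm : ℝ → ℝ) (hfp : ContDiff ℝ (⊤ : ℕ∞) fp) (hfm : ContDiff ℝ (⊤ : ℕ∞) fm) (u₀ : ℝ)
    (h1 : deriv fp u₀ = deriv fm u₀)
    (h2 : deriv (deriv fp) u₀ ≠ deriv (deriv fm) u₀) :
    ∃ ε₁ > (0:ℝ), ∃ C > (0:ℝ), ∃ up um : ℝ → ℝ, ∀ ε : ℝ, 0 < ε → ε < ε₁ →
      (up ε ∈ Set.Ioo u₀ (u₀ + 2 * ε) ∧
        deriv fp (up ε + ε) - deriv fm (up ε - ε) - 2 * ε * deriv (deriv fp) (up ε + ε) = 0 ∧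
        (∀ u ∈ Set.Ioo u₀ (u₀ + 2 * ε),
          deriv fp (u + ε) - deriv fm (u - ε) - 2 * ε * deriv (deriv fp) (u + ε) = 0 →
          u = up ε) ∧
        |up ε - (u₀ + ε +
          (2 * deriv (deriv (deriv fp)) u₀ /
            (deriv (deriv fp) u₀ - deriv (deriv fm) u₀)) * ε ^ 2)| ≤ C * ε ^ 3) ∧
      (um ε ∈ Set.Ioo u₀ (u₀ + 2 * ε) ∧
        deriv fm (um ε + ε) - deriv fp (um ε - ε) - 2 * ε * deriv (deriv fm) (um ε + ε) = 0 ∧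
        (∀ u ∈ Set.Ioo u₀ (u₀ + 2 * ε),
          deriv fm (u + ε) - deriv fp (u - ε) - 2 * ε * deriv (deriv fm) (u + ε) = 0 →
          u = um ε) ∧
        |um ε - (u₀ + ε +
          (-(2 * deriv (deriv (deriv fm)) u₀) /
            (deriv (deriv fp) u₀ - deriv (deriv fm) u₀)) * ε ^ 2)| ≤ C * ε ^ 3) := by
  have hfp' : ContDiff ℝ ∞ fp := hfp.of_le (by simp)
  have hfm' : ContDiff ℝ ∞ fm := hfm.of_le (by simp)
  obtain ⟨ε₁p, hε₁p, Cp, hCp, up, hup⟩ := core' fp fm hfp' hfm' u₀ h1 h2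
  obtain ⟨ε₁m, hε₁m, Cm, hCm, um, hum⟩ := core' fm fp hfm' hfp' u₀ h1.symm (Ne.symm h2)
  refine ⟨min ε₁p ε₁m, lt_min hε₁p hε₁m, max Cp Cm, lt_max_of_lt_left hCp, up, um,
    fun ε hε hεε₁ => ?_⟩
  have hεp : ε < ε₁p := lt_of_lt_of_le hεε₁ (min_le_left _ _)
  have hεm : ε < ε₁m := lt_of_lt_of_le hεε₁ (min_le_right _ _)
  obtain ⟨hp1, hp2', hp3, hp4⟩ := hup ε hε hεp
  obtain ⟨hm1, hm2', hm3, hm4⟩ := hum ε hε hεm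
  have hmax : ∀ c : ℝ, c ≤ max Cp Cm → ∀ x : ℝ, |x| ≤ c * ε ^ 3 → |x| ≤ max Cp Cm * ε ^ 3 :=
    fun c hc x hx => hx.trans (mul_le_mul_of_nonneg_right hc (by positivity))
  refine ⟨⟨hp1, hp2', hp3, hmax Cp (le_max_left _ _) _ hp4⟩,
    ⟨hm1, hm2', hm3, ?_⟩⟩
  have hrw : -(2 * deriv (deriv (deriv fm)) u₀) / (deriv (deriv fp) u₀ - deriv (deriv fm) u₀)
      = 2 * deriv (deriv (deriv fm)) u₀ / (deriv (deriv fm) u₀ - deriv (deriv fp) u₀) := by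
    rw [show deriv (deriv fp) u₀ - deriv (deriv fm) u₀
        = -(deriv (deriv fm) u₀ - deriv (deriv fp) u₀) from by ring,
      show -(2 * deriv (deriv (deriv fm)) u₀) = 2 * -(deriv (deriv (deriv fm)) u₀) from by ring,
      show -(deriv (deriv fm) u₀ - deriv (deriv fp) u₀)
        = -(deriv (deriv fm) u₀) - -(deriv (deriv fp) u₀) from by ring]
    exact neg_div_helper _ _ _
  rw [hrw]
  exact hmax Cm (le_max_right _ _) _ hm4

end
end
end

section
/- Let f₊(t) = a₃t³ + a₂t² + a₁⁺t + a₀⁺ and f₋(t) = a₃t³ + a₂t² + a₁⁻t + a₀⁻ be cubic polynomials with the same leading and quadratic coefficients, a₃ > 0 and a₁⁺ > a₁⁻, and set ε₀ = √((a₁⁺ − a₁⁻)/(12a₃)). Then for ε > 0, the inequalities f₊′(u+ε) − f₋′(u−ε) − 2ε·f₊″(u+ε) ≥ 0 and f₊′(u+ε) − f₋′(u−ε) − 2ε·f₋″(u−ε) ≥ 0 hold for every u ∈ ℝ if and only if ε ≤ ε₀; indeed the two left-hand sides are identically equal to (a₁⁺ − a₁⁻) − 12a₃ε² and (a₁⁺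 − a₁⁻) + 12a₃ε², respectively. Consequently, for ε ≤ ε₀ the function B(x₁,x₂) = ((ε+x₂)/(2ε))·f₊(x₁−x₂+ε) + ((ε−x₂)/(2ε))·f₋(x₁−x₂−ε) is diagonally concave on all of Ω_ε. -/
/-!
For cubics sharing `a₃` and `a₂`, the difference `f₊' - f₋'` of the shifted derivatives and the
second derivatives are affine in `u` with matching slopes, so both foliation conditions are
constants in `u`, and `ε ≤ ε₀` is just `12 a₃ ε² ≤ a₁⁺ - a₁⁻`.

`B` is affine along lines parallel to `(1,1)`. Along a line parallel to `(1,-1)` it is a cubic in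
the height `x₂` (the quartic terms cancel because the leading coefficients agree), and its
concavity gap between heights `y`, `z` with intermediate height `m` is
`θ (1 - θ) (y - z)² (a₁⁺ - a₁⁻ - 4 a₃ ε (m + y + z)) / ε`, which is nonnegative as soon as
`y, z, m ≤ ε` and `12 a₃ ε² ≤ a₁⁺ - a₁⁻`.
-/

open Set

noncomputable section

/-- The horizontal strip `Ω_ε = ℝ × [-ε, ε]`. -/
def strip (ε : ℝ) : Set (ℝ × ℝ) := {x : ℝ × ℝ | -ε ≤ x.2 ∧ x.2 ≤ ε}

/-- Diagonal concavity: concavity along every segment parallel to `(1,1)` or `(1,-1)`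
contained in the set. -/
def DiagConcaveOn (S : Set (ℝ × ℝ)) (G : ℝ × ℝ → ℝ) : Prop :=
  ∀ a b : ℝ × ℝ, a ∈ S → b ∈ S →
    (b.1 - a.1 = b.2 - a.2 ∨ b.1 - a.1 = -(b.2 - a.2)) →
    segment ℝ a b ⊆ S →
    ∀ θ : ℝ, 0 ≤ θ → θ ≤ 1 →
      θ * G a + (1 - θ) * G b ≤ G (θ • a + (1 - θ) • b)

/-- A cubic polynomial. -/
def cubic (a₃ a₂ a₁ a₀ : ℝ) : ℝ → ℝ := fun t => a₃ * t ^ 3 + a₂ * t ^ 2 + a₁ * t + a₀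

theorem deriv_cubic (a₃ a₂ a₁ a₀ : ℝ) :
    deriv (cubic a₃ a₂ a₁ a₀) = fun t => 3 * a₃ * t ^ 2 + 2 * a₂ * t + a₁ := by
  funext t
  have h := ((((hasDerivAt_pow 3 t).const_mul a₃).add ((hasDerivAt_pow 2 t).const_mul a₂)).add
    ((hasDerivAt_id t).const_mul a₁)).add_const a₀
  exact h.deriv.trans (by norm_num; ring)

theorem deriv_deriv_cubic (a₃ a₂ a₁ a₀ : ℝ) :
    deriv (deriv (cubic a₃ a₂ a₁ a₀)) = fun t => 6 * a₃ * t + 2 * a₂ := by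
  funext t
  have h := (((hasDerivAt_pow 2 t).const_mul (3 * a₃)).add
    ((hasDerivAt_id t).const_mul (2 * a₂))).add_const a₁
  rw [deriv_cubic]
  exact h.deriv.trans (by norm_num; ring)

theorem le_sqrt_div_iff_mul_sq_le {ε k c : ℝ} (hε : 0 < ε) (hk : 0 < k) :
    ε ≤ √(c / k) ↔ k * ε ^ 2 ≤ c := by
  rw [Real.le_sqrt' hε, le_div_iff₀ hk, mul_comm]

/-- Interpolation, linear along each line parallel to `(1,1)`, between `f₋` on `x₂ = -ε` and
`f₊` on `x₂ = ε`. -/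
def diagInterp (ε : ℝ) (fp fm : ℝ → ℝ) (x : ℝ × ℝ) : ℝ :=
  ((ε + x.2) / (2 * ε)) * fp (x.1 - x.2 + ε) + ((ε - x.2) / (2 * ε)) * fm (x.1 - x.2 - ε)

theorem diagInterp_convex_combo_of_diag (ε : ℝ) (fp fm : ℝ → ℝ) {a b : ℝ × ℝ}
    (hab : b.1 - a.1 = b.2 - a.2) (θ : ℝ) :
    diagInterp ε fp fm (θ • a + (1 - θ) • b) =
      θ * diagInterp ε fp fm a + (1 - θ) * diagInterp ε fp fm b := by
  have hb : b.1 - b.2 = a.1 - a.2 := by linarith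
  have hm : (θ • a + (1 - θ) • b).1 - (θ • a + (1 - θ) • b).2 = a.1 - a.2 := by
    simp only [Prod.fst_add, Prod.snd_add, Prod.smul_fst, Prod.smul_snd, smul_eq_mul]
    linear_combination (1 - θ) * hb
  simp only [diagInterp, hm, hb]
  simp only [Prod.snd_add, Prod.smul_snd, smul_eq_mul]
  ring

section Cubic

variable {a₃ a₂ a1p a1m a0p a0m ε : ℝ}

theorem cubic_condition_plus_eq (u : ℝ) :
    deriv (cubic a₃ a₂ a1p a0p) (u + ε) - deriv (cubic a₃ a₂ a1m a0m) (u - ε) -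
        2 * ε * deriv (deriv (cubic a₃ a₂ a1p a0p)) (u + ε) =
      (a1p - a1m) - 12 * a₃ * ε ^ 2 := by
  simp only [deriv_deriv_cubic]
  simp only [deriv_cubic]
  ring

theorem cubic_condition_minus_eq (u : ℝ) :
    deriv (cubic a₃ a₂ a1p a0p) (u + ε) - deriv (cubic a₃ a₂ a1m a0m) (u - ε) -
        2 * ε * deriv (deriv (cubic a₃ a₂ a1m a0m)) (u - ε) =
      (a1p - a1m) + 12 * a₃ * ε ^ 2 := by
  simp only [deriv_deriv_cubic]
  simp only [deriv_cubic]
  ring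

theorem diagInterp_cubic_concavity_gap_of_antidiag (hε : ε ≠ 0) {a b : ℝ × ℝ}
    (hab : b.1 - a.1 = -(b.2 - a.2)) (θ : ℝ) :
    diagInterp ε (cubic a₃ a₂ a1p a0p) (cubic a₃ a₂ a1m a0m) (θ • a + (1 - θ) • b) -
        (θ * diagInterp ε (cubic a₃ a₂ a1p a0p) (cubic a₃ a₂ a1m a0m) a +
          (1 - θ) * diagInterp ε (cubic a₃ a₂ a1p a0p) (cubic a₃ a₂ a1m a0m) b) =
      θ * (1 - θ) * (a.2 - b.2) ^ 2 *
        ((a1p - a1m) - 4 * a₃ * ε * ((θ • a + (1 - θ) • b).2 + a.2 + b.2)) / ε := by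
  simp only [diagInterp, cubic, Prod.fst_add, Prod.snd_add, Prod.smul_fst, Prod.smul_snd,
    smul_eq_mul]
  rw [show b.1 = a.1 + a.2 - b.2 by linarith]
  field_simp
  ring

theorem diagConcaveOn_strip_diagInterp_cubic (hε : 0 < ε) (ha₃ : 0 ≤ a₃)
    (h : 12 * a₃ * ε ^ 2 ≤ a1p - a1m) :
    DiagConcaveOn (strip ε) (diagInterp ε (cubic a₃ a₂ a1p a0p) (cubic a₃ a₂ a1m a0m)) := by
  intro a b ha hb hdir hseg θ hθ₀ hθ₁
  rcases hdir with hdiag | hantidiag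
  · exact (diagInterp_convex_combo_of_diag ε _ _ hdiag θ).ge
  rw [← sub_nonneg, diagInterp_cubic_concavity_gap_of_antidiag hε.ne' hantidiag]
  have hm : θ • a + (1 - θ) • b ∈ strip ε :=
    hseg ⟨θ, 1 - θ, hθ₀, sub_nonneg.2 hθ₁, add_sub_cancel θ 1, rfl⟩
  have hsum : (θ • a + (1 - θ) • b).2 + a.2 + b.2 ≤ 3 * ε := by
    linarith [hm.2, ha.2, hb.2]
  have hbracket : 0 ≤ (a1p - a1m) - 4 * a₃ * ε * ((θ • a + (1 - θ) • b).2 + a.2 + b.2) := by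
    linarith [mul_le_mul_of_nonneg_left hsum (by positivity : 0 ≤ 4 * a₃ * ε)]
  have hθ : 0 ≤ θ * (1 - θ) := mul_nonneg hθ₀ (sub_nonneg.2 hθ₁)
  positivity

end Cubic

theorem cubic_equal_quadratic_simple_foliation_general
    (a₃ a₂ a1p a1m a0p a0m : ℝ) (ha₃ : 0 < a₃)
    (ε : ℝ) (hε : 0 < ε) :
    (∀ u : ℝ,
      deriv (cubic a₃ a₂ a1p a0p) (u + ε) - deriv (cubic a₃ a₂ a1m a0m) (u - ε) -
          2 * ε * deriv (deriv (cubic a₃ a₂ a1p a0p)) (u + ε) =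
        (a1p - a1m) - 12 * a₃ * ε ^ 2 ∧
      deriv (cubic a₃ a₂ a1p a0p) (u + ε) - deriv (cubic a₃ a₂ a1m a0m) (u - ε) -
          2 * ε * deriv (deriv (cubic a₃ a₂ a1m a0m)) (u - ε) =
        (a1p - a1m) + 12 * a₃ * ε ^ 2) ∧
    ((∀ u : ℝ,
      0 ≤ deriv (cubic a₃ a₂ a1p a0p) (u + ε) - deriv (cubic a₃ a₂ a1m a0m) (u - ε) -
          2 * ε * deriv (deriv (cubic a₃ a₂ a1p a0p)) (u + ε) ∧
      0 ≤ deriv (cubic a₃ a₂ a1p a0p) (u + ε) - deriv (cubic a₃ a₂ a1m a0m) (u - ε) -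
          2 * ε * deriv (deriv (cubic a₃ a₂ a1m a0m)) (u - ε)) ↔
      ε ≤ Real.sqrt ((a1p - a1m) / (12 * a₃))) ∧
    (ε ≤ Real.sqrt ((a1p - a1m) / (12 * a₃)) →
      DiagConcaveOn (strip ε)
        (fun x : ℝ × ℝ =>
          ((ε + x.2) / (2 * ε)) * cubic a₃ a₂ a1p a0p (x.1 - x.2 + ε) +
          ((ε - x.2) / (2 * ε)) * cubic a₃ a₂ a1m a0m (x.1 - x.2 - ε))) := by
  have hε₀ : ε ≤ √((a1p - a1m) / (12 * a₃)) ↔ 12 * a₃ * ε ^ 2 ≤ a1p - a1m :=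
    le_sqrt_div_iff_mul_sq_le hε (by positivity)
  refine ⟨fun u => ⟨cubic_condition_plus_eq u, cubic_condition_minus_eq u⟩, ?_,
    fun h => diagConcaveOn_strip_diagInterp_cubic hε ha₃.le (hε₀.1 h)⟩
  simp only [cubic_condition_plus_eq, cubic_condition_minus_eq, hε₀]
  have hpos : 0 < a₃ * ε ^ 2 := by positivity
  exact ⟨fun h => by linarith [(h 0).1], fun h _ => ⟨by linarith, by linarith⟩⟩

/-- For cubic boundary data with equal leading and quadratic coefficients and `a₁⁺ > a₁⁻`,
the right simple-foliation concavity conditions hold everywhere iff `ε ≤ ε₀`; the two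
left-hand sides are identically `(a₁⁺-a₁⁻) ∓ 12 a₃ ε²`. -/
theorem cubic_equal_quadratic_simple_foliation
    (a₃ a₂ a1p a1m a0p a0m : ℝ) (ha₃ : 0 < a₃) (ha₁ : a1m < a1p)
    (ε : ℝ) (hε : 0 < ε) :
    (∀ u : ℝ,
      deriv (cubic a₃ a₂ a1p a0p) (u + ε) - deriv (cubic a₃ a₂ a1m a0m) (u - ε) -
          2 * ε * deriv (deriv (cubic a₃ a₂ a1p a0p)) (u + ε) =
        (a1p - a1m) - 12 * a₃ * ε ^ 2 ∧
      deriv (cubic a₃ a₂ a1p a0p) (u + ε) - deriv (cubic a₃ a₂ a1m a0m) (u - ε) -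
          2 * ε * deriv (deriv (cubic a₃ a₂ a1m a0m)) (u - ε) =
        (a1p - a1m) + 12 * a₃ * ε ^ 2) ∧
    ((∀ u : ℝ,
      0 ≤ deriv (cubic a₃ a₂ a1p a0p) (u + ε) - deriv (cubic a₃ a₂ a1m a0m) (u - ε) -
          2 * ε * deriv (deriv (cubic a₃ a₂ a1p a0p)) (u + ε) ∧
      0 ≤ deriv (cubic a₃ a₂ a1p a0p) (u + ε) - deriv (cubic a₃ a₂ a1m a0m) (u - ε) -
          2 * ε * deriv (deriv (cubic a₃ a₂ a1m a0m)) (u - ε)) ↔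
      ε ≤ Real.sqrt ((a1p - a1m) / (12 * a₃))) ∧
    (ε ≤ Real.sqrt ((a1p - a1m) / (12 * a₃)) →
      DiagConcaveOn (strip ε)
        (fun x : ℝ × ℝ =>
          ((ε + x.2) / (2 * ε)) * cubic a₃ a₂ a1p a0p (x.1 - x.2 + ε) +
          ((ε - x.2) / (2 * ε)) * cubic a₃ a₂ a1m a0m (x.1 - x.2 - ε))) :=
  cubic_equal_quadratic_simple_foliation_general a₃ a₂ a1p a1m a0p a0m ha₃ ε hε
end
end

section
/- Fix ε > 0 and ε₀ > 0, and consider the ODE T′ = T·(ε·T − ε₀²)/(ε·ε₀² − T³) governing the spine of a left herringbone for cubic boundary data. Then: (a) the constant functions T ≡ 0 and T ≡ ε₀²/ε are solutions; (b) if T : I → ℝ is a differentiable function on an interval I with T(u) ∉ {0, ε₀²/ε} and ε·ε₀² − T(u)³ ≠ 0 for all u ∈ I, and if there is a constant c such that u = −T(u)²/(2ε) − (ε₀²/ε²)·T(u) − ε·log|T(u)| + ((ε⁴ − ε₀⁴)/ε³)·log|T(u) − ε₀²/ε| + c for all u ∈ I, then T satisfies T′(u) = T(u)·(ε·T(u)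 − ε₀²)/(ε·ε₀² − T(u)³) on I. -/
/-!
The implicit relation says `F(T(u)) = u` for the potential `F` on its right-hand side, and
`F'(y) = (εε₀² - y³)/(y(εy - ε₀²))`. Differentiating the relation gives `F'(T u) · T'(u) = 1`,
so `T'` is the reciprocal of `F'`, which is the right-hand side of the ODE. The constant
`ε₀²/ε` is a solution because it kills the factor `εT - ε₀²`.
-/

open Set Filter Topology

theorem deriv_eq_inv_of_comp_eventuallyEq_id {𝕜 : Type*} [NontriviallyNormedField 𝕜]
    {F T : 𝕜 → 𝕜} {D u : 𝕜} (hF : HasDerivAt F D (T u)) (hT : DifferentiableAt 𝕜 T u)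
    (hFT : F ∘ T =ᶠ[𝓝 u] id) : deriv T u = D⁻¹ := by
  have hid : HasDerivAt id (D * deriv T u) u :=
    (hF.comp u hT.hasDerivAt).congr_of_eventuallyEq hFT.symm
  exact eq_inv_of_mul_eq_one_right (hid.unique (hasDerivAt_id u))

noncomputable def cubicSpinePotential (ε ε₀ c y : ℝ) : ℝ :=
  -y ^ 2 / (2 * ε) - (ε₀ ^ 2 / ε ^ 2) * y - ε * Real.log |y| +
    ((ε ^ 4 - ε₀ ^ 4) / ε ^ 3) * Real.log |y - ε₀ ^ 2 / ε| + c

theorem hasDerivAt_cubicSpinePotential {ε ε₀ y : ℝ} (c : ℝ) (hε : ε ≠ 0) (hy : y ≠ 0)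
    (hyk : y ≠ ε₀ ^ 2 / ε) :
    HasDerivAt (cubicSpinePotential ε ε₀ c)
      ((ε * ε₀ ^ 2 - y ^ 3) / (y * (ε * y - ε₀ ^ 2))) y := by
  have hyk' : y - ε₀ ^ 2 / ε ≠ 0 := sub_ne_zero.mpr hyk
  have hεyk : ε * y - ε₀ ^ 2 ≠ 0 := by
    rwa [mul_comm, ne_eq, sub_eq_zero, ← eq_div_iff hε]
  have h := (((((hasDerivAt_pow 2 y).neg.div_const (2 * ε)).sub
    ((hasDerivAt_id y).const_mul (ε₀ ^ 2 / ε ^ 2))).sub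
    (((hasDerivAt_id y).log hy).const_mul ε)).add
    ((((hasDerivAt_id y).sub_const (ε₀ ^ 2 / ε)).log hyk').const_mul
      ((ε ^ 4 - ε₀ ^ 4) / ε ^ 3))).add_const c
  have hlog_abs : cubicSpinePotential ε ε₀ c = fun z => -z ^ 2 / (2 * ε) - (ε₀ ^ 2 / ε ^ 2) * z -
      ε * Real.log z + ((ε ^ 4 - ε₀ ^ 4) / ε ^ 3) * Real.log (z - ε₀ ^ 2 / ε) + c := by
    funext z
    simp only [cubicSpinePotential, Real.log_abs]
  rw [hlog_abs]
  refine h.congr_deriv ?_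
  simp only [id, Nat.cast_ofNat, mul_one]
  field_simp
  ring

theorem cubic_spine_ode_solutions_general (ε ε₀ : ℝ) (hε : 0 < ε) :
    (∀ u : ℝ, deriv (fun _ : ℝ => (0 : ℝ)) u =
      (0 : ℝ) * (ε * 0 - ε₀ ^ 2) / (ε * ε₀ ^ 2 - 0 ^ 3)) ∧
    (∀ u : ℝ, deriv (fun _ : ℝ => ε₀ ^ 2 / ε) u =
      (ε₀ ^ 2 / ε) * (ε * (ε₀ ^ 2 / ε) - ε₀ ^ 2) / (ε * ε₀ ^ 2 - (ε₀ ^ 2 / ε) ^ 3)) ∧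
    (∀ (a b : ℝ) (T : ℝ → ℝ) (c : ℝ),
      (∀ u ∈ Set.Ioo a b, DifferentiableAt ℝ T u) →
      (∀ u ∈ Set.Ioo a b, T u ≠ 0 ∧ T u ≠ ε₀ ^ 2 / ε ∧ ε * ε₀ ^ 2 - (T u) ^ 3 ≠ 0) →
      (∀ u ∈ Set.Ioo a b,
        u = -(T u) ^ 2 / (2 * ε) - (ε₀ ^ 2 / ε ^ 2) * T u - ε * Real.log |T u| +
          ((ε ^ 4 - ε₀ ^ 4) / ε ^ 3) * Real.log |T u - ε₀ ^ 2 / ε| + c) →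
      ∀ u ∈ Set.Ioo a b,
        deriv T u = T u * (ε * T u - ε₀ ^ 2) / (ε * ε₀ ^ 2 - (T u) ^ 3)) := by
  refine ⟨fun u => by simp, fun u => by rw [mul_div_cancel₀ _ hε.ne', sub_self]; simp, ?_⟩
  intro a b T c hdiff hne hrel u hu
  have hFT : cubicSpinePotential ε ε₀ c ∘ T =ᶠ[𝓝 u] id := by
    filter_upwards [Ioo_mem_nhds hu.1 hu.2] with v hv
    exact (hrel v hv).symm
  rw [deriv_eq_inv_of_comp_eventuallyEq_id (hasDerivAt_cubicSpinePotential c hε.ne'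
    (hne u hu).1 (hne u hu).2.1) (hdiff u hu) hFT, inv_div]

/-- The spine ODE `T' = T(εT - ε₀²)/(εε₀² - T³)` for cubic boundary data: the constants `0`
and `ε₀²/ε` are solutions, and any function satisfying the implicit relation (7.6) of the
paper solves the ODE. -/
theorem cubic_spine_ode_solutions (ε ε₀ : ℝ) (hε : 0 < ε) (hε₀ : 0 < ε₀) :
    (∀ u : ℝ, deriv (fun _ : ℝ => (0 : ℝ)) u =
      (0 : ℝ) * (ε * 0 - ε₀ ^ 2) / (ε * ε₀ ^ 2 - 0 ^ 3)) ∧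
    (∀ u : ℝ, deriv (fun _ : ℝ => ε₀ ^ 2 / ε) u =
      (ε₀ ^ 2 / ε) * (ε * (ε₀ ^ 2 / ε) - ε₀ ^ 2) / (ε * ε₀ ^ 2 - (ε₀ ^ 2 / ε) ^ 3)) ∧
    (∀ (a b : ℝ) (T : ℝ → ℝ) (c : ℝ),
      (∀ u ∈ Set.Ioo a b, DifferentiableAt ℝ T u) →
      (∀ u ∈ Set.Ioo a b, T u ≠ 0 ∧ T u ≠ ε₀ ^ 2 / ε ∧ ε * ε₀ ^ 2 - (T u) ^ 3 ≠ 0) →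
      (∀ u ∈ Set.Ioo a b,
        u = -(T u) ^ 2 / (2 * ε) - (ε₀ ^ 2 / ε ^ 2) * T u - ε * Real.log |T u| +
          ((ε ^ 4 - ε₀ ^ 4) / ε ^ 3) * Real.log |T u - ε₀ ^ 2 / ε| + c) →
      ∀ u ∈ Set.Ioo a b,
        deriv T u = T u * (ε * T u - ε₀ ^ 2) / (ε * ε₀ ^ 2 - (T u) ^ 3)) :=
  cubic_spine_ode_solutions_general ε ε₀ hε
end

section
/- Let f₊(t) = a₃t³ + a₂t² + a₁⁺t + a₀⁺ and f₋(t) = a₃t³ + a₂t² + a₁⁻t + a₀⁻ with a₃ > 0 and a₁⁺ > a₁⁻, set ε₀ = √((a₁⁺ − a₁⁻)/(12a₃)), and let ε > ε₀. Put τ = ε₀²/ε (so 0 < τ < ε), and define A(u) = ((ε²−τ²)/(2ετ))·[(ε+τ)·f₊′(u+τ−ε) − (ε−τ)·f₋′(u−τ−ε)] + ((ε+τ)·f₊(u+τ−ε) + (ε−τ)·f₋(u−τ−ε))/(2ε). Define B on Ω_ε by B(x₁,x₂) = ((ε−x₂)·A(x₁+x₂−τ) + (x₂−τ)·f₊(x₁+x₂−ε))/(ε−τ)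 for x₂ ≥ τ, and B(x₁,x₂) = ((ε+x₂)·A(x₁−x₂+τ) + (τ−x₂)·f₋(x₁−x₂−ε))/(ε+τ) for x₂ ≤ τ. Then B is diagonally concave on Ω_ε, satisfies B(x₁,ε) = f₊(x₁) and B(x₁,−ε) = f₋(x₁), and is pointwise minimal: for every diagonally concave H : Ω_ε → ℝ with H(x₁,ε) = f₊(x₁) and H(x₁,−ε) = f₋(x₁) for all x₁, one has B(x) ≤ H(x) for all x ∈ Ω_ε. -/
/-!
Along every diagonal line `x₁ - x₂ = c` the two rib formulas of the herringbone differ by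
`-4a₃ (x₂ - τ)³` (this is where `a₁⁺ - a₁⁻ = 12 a₃ ε τ`, i.e. `τ = ε₀²/ε`, enters), so `B` is an
affine function minus `4a₃ (x₂ - τ)₊³`, and symmetrically along anti-diagonals; hence `B` is
diagonally concave.

For minimality, `B` is affine along every rib, so it suffices to show `A u ≤ H (u, τ)`. The lower
rib through `(u, τ)`, prolonged to `(u + t, τ + t)`, meets there the upper rib through
`(u + 2t, τ)`; concavity of `H` along both chords gives, for `D u = A u - H (u, τ)`,
`D u ≤ c D (u + 2t) + (1 - c) K t²` with `0 ≤ c < 1`. Since `D` is bounded above (one full chord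
through `(u, τ)`), taking suprema gives `D ≤ K t²` for every small `t > 0`, hence `D ≤ 0`.
-/

open Set

noncomputable section

theorem mk_mem_strip {ε a b : ℝ} : (a, b) ∈ strip ε ↔ -ε ≤ b ∧ b ≤ ε := Iff.rfl

theorem convex_strip (ε : ℝ) : Convex ℝ (strip ε) :=
  (convex_Icc (-ε) ε).linear_preimage (LinearMap.snd ℝ ℝ ℝ)

theorem diagConcaveOn_strip_iff {ε : ℝ} {G : ℝ × ℝ → ℝ} :
    DiagConcaveOn (strip ε) G ↔ ∀ c : ℝ,
      ConcaveOn ℝ (Icc (-ε) ε) (fun t => G (c + t, t)) ∧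
      ConcaveOn ℝ (Icc (-ε) ε) (fun t => G (c - t, t)) := by
  constructor
  · intro hG c
    have chord : ∀ {p q : ℝ × ℝ}, p.2 ∈ Icc (-ε) ε → q.2 ∈ Icc (-ε) ε →
        (q.1 - p.1 = q.2 - p.2 ∨ q.1 - p.1 = -(q.2 - p.2)) → ∀ {a b : ℝ}, 0 ≤ a → 0 ≤ b →
        a + b = 1 → a * G p + b * G q ≤ G (a • p + b • q) := by
      intro p q hp hq hdir a b ha hb hab
      obtain rfl : b = 1 - a := by linarith
      exact hG p q hp hq hdir ((convex_strip ε).segment_subset hp hq) a ha (by linarith)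
    refine ⟨⟨convex_Icc _ _, fun s hs t ht a b ha hb hab => ?_⟩,
      ⟨convex_Icc _ _, fun s hs t ht a b ha hb hab => ?_⟩⟩
    · have key := chord (p := (c + s, s)) (q := (c + t, t)) hs ht (Or.inl (by ring)) ha hb hab
      simp only [Prod.smul_mk, Prod.mk_add_mk, smul_eq_mul] at key ⊢
      exact key.trans_eq (congrArg G (Prod.ext (by linear_combination c * hab) rfl))
    · have key := chord (p := (c - s, s)) (q := (c - t, t)) hs ht (Or.inr (by ring)) ha hb hab
      simp only [Prod.smul_mk, Prod.mk_add_mk, smul_eq_mul] at key ⊢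
      exact key.trans_eq (congrArg G (Prod.ext (by linear_combination c * hab) rfl))
  · rintro hG ⟨a₁, a₂⟩ ⟨b₁, b₂⟩ ha hb hdir - θ hθ0 hθ1
    simp only [Prod.smul_mk, Prod.mk_add_mk, smul_eq_mul] at hdir ⊢
    rcases hdir with hdir | hdir
    · obtain ⟨c, rfl⟩ : ∃ c, a₁ = c + a₂ := ⟨a₁ - a₂, by ring⟩
      obtain rfl : b₁ = c + b₂ := by linarith
      have key := (hG c).1.2 ha hb hθ0 (sub_nonneg.2 hθ1) (add_sub_cancel θ 1)
      simp only [smul_eq_mul] at key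
      exact key.trans_eq (congrArg G (Prod.ext (by ring) rfl))
    · obtain ⟨c, rfl⟩ : ∃ c, a₁ = c - a₂ := ⟨a₁ + a₂, by ring⟩
      obtain rfl : b₁ = c - b₂ := by linarith
      have key := (hG c).2.2 ha hb hθ0 (sub_nonneg.2 hθ1) (add_sub_cancel θ 1)
      simp only [smul_eq_mul] at key
      exact key.trans_eq (congrArg G (Prod.ext (by ring) rfl))

theorem ConcaveOn.sub_mul_add_sub_mul_le {I : Set ℝ} {g : ℝ → ℝ} (hg : ConcaveOn ℝ I g)
    {s r t : ℝ} (hs : s ∈ I) (ht : t ∈ I) (hsr : s ≤ r) (hrt : r ≤ t) :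
    (t - r) * g s + (r - s) * g t ≤ (t - s) * g r := by
  rcases hsr.eq_or_lt with rfl | hsr'
  · simp
  have hts : 0 < t - s := by linarith
  have := hg.2 hs ht (div_nonneg (sub_nonneg.2 hrt) hts.le) (div_nonneg (sub_nonneg.2 hsr) hts.le)
    (by field_simp; ring)
  have hr : ((t - r) / (t - s)) • s + ((r - s) / (t - s)) • t = r := by
    simp only [smul_eq_mul]; field_simp; ring
  rw [hr, smul_eq_mul, smul_eq_mul] at this
  calc (t - r) * g s + (r - s) * g t
      = (t - s) * ((t - r) / (t - s) * g s + (r - s) / (t - s) * g t) := by field_simp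
    _ ≤ (t - s) * g r := mul_le_mul_of_nonneg_left this hts.le

theorem DiagConcaveOn.sub_mul_add_sub_mul_le_of_sub_eq {ε : ℝ} {H : ℝ × ℝ → ℝ}
    (hH : DiagConcaveOn (strip ε) H) {p q r : ℝ × ℝ} (hp : p ∈ strip ε) (hq : q ∈ strip ε)
    (hpr : p.1 - p.2 = r.1 - r.2) (hqr : q.1 - q.2 = r.1 - r.2) (hp₂ : p.2 ≤ r.2)
    (hq₂ : r.2 ≤ q.2) :
    (q.2 - r.2) * H p + (r.2 - p.2) * H q ≤ (q.2 - p.2) * H r := by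
  have key := (diagConcaveOn_strip_iff.1 hH (r.1 - r.2)).1.sub_mul_add_sub_mul_le hp hq hp₂ hq₂
  have e : ∀ x : ℝ × ℝ, x.1 - x.2 = r.1 - r.2 → (r.1 - r.2 + x.2, x.2) = x :=
    fun x hx => Prod.ext (by simp only; linarith) rfl
  rwa [e p hpr, e q hqr, e r rfl] at key

theorem DiagConcaveOn.sub_mul_add_sub_mul_le_of_add_eq {ε : ℝ} {H : ℝ × ℝ → ℝ}
    (hH : DiagConcaveOn (strip ε) H) {p q r : ℝ × ℝ} (hp : p ∈ strip ε) (hq : q ∈ strip ε)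
    (hpr : p.1 + p.2 = r.1 + r.2) (hqr : q.1 + q.2 = r.1 + r.2) (hp₂ : p.2 ≤ r.2)
    (hq₂ : r.2 ≤ q.2) :
    (q.2 - r.2) * H p + (r.2 - p.2) * H q ≤ (q.2 - p.2) * H r := by
  have key := (diagConcaveOn_strip_iff.1 hH (r.1 + r.2)).2.sub_mul_add_sub_mul_le hp hq hp₂ hq₂
  have e : ∀ x : ℝ × ℝ, x.1 + x.2 = r.1 + r.2 → (r.1 + r.2 - x.2, x.2) = x :=
    fun x hx => Prod.ext (by simp only; linarith) rfl
  rwa [e p hpr, e q hqr, e r (by ring)] at key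

theorem ConvexOn.concaveOn_affine_sub {s : Set ℝ} {g : ℝ → ℝ} (hg : ConvexOn ℝ s g) (α β : ℝ) :
    ConcaveOn ℝ s (fun t => α + β * t - g t) := by
  refine ⟨hg.1, fun x hx y hy a b ha hb hab => ?_⟩
  have := hg.2 hx hy ha hb hab
  simp only [smul_eq_mul] at *
  linear_combination this + α * hab

theorem convexOn_max_affine_zero_pow (a b : ℝ) (n : ℕ) :
    ConvexOn ℝ univ (fun t : ℝ => max (a * t + b) 0 ^ n) := by
  have hlin : ConvexOn ℝ univ (fun t : ℝ => a * t + b) :=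
    ((a • LinearMap.id : ℝ →ₗ[ℝ] ℝ).convexOn convex_univ).add_const b
  exact (hlin.sup (convexOn_const 0 convex_univ)).pow (fun _ _ => le_max_right _ _) n

def upperRib (ε τ : ℝ) (fp A : ℝ → ℝ) (x : ℝ × ℝ) : ℝ :=
  ((ε - x.2) * A (x.1 + x.2 - τ) + (x.2 - τ) * fp (x.1 + x.2 - ε)) / (ε - τ)

def lowerRib (ε τ : ℝ) (fm A : ℝ → ℝ) (x : ℝ × ℝ) : ℝ :=
  ((ε + x.2) * A (x.1 - x.2 + τ) + (τ - x.2) * fm (x.1 - x.2 - ε)) / (ε + τ)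

def herringbone (ε τ : ℝ) (fp fm A : ℝ → ℝ) (x : ℝ × ℝ) : ℝ :=
  if τ ≤ x.2 then upperRib ε τ fp A x else lowerRib ε τ fm A x

section Herringbone

variable {ε τ k : ℝ} {fp fm A : ℝ → ℝ}

theorem herringbone_eq_lowerRib_sub
    (hgap : ∀ x, upperRib ε τ fp A x - lowerRib ε τ fm A x = -k * (x.2 - τ) ^ 3) (x : ℝ × ℝ) :
    herringbone ε τ fp fm A x = lowerRib ε τ fm A x - k * max (x.2 - τ) 0 ^ 3 := by
  unfold herringbone
  split_ifs with h
  · rw [max_eq_left (by linarith)]; linear_combination hgap x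
  · rw [max_eq_right (by linarith)]; ring

theorem herringbone_eq_upperRib_sub
    (hgap : ∀ x, upperRib ε τ fp A x - lowerRib ε τ fm A x = -k * (x.2 - τ) ^ 3) (x : ℝ × ℝ) :
    herringbone ε τ fp fm A x = upperRib ε τ fp A x - k * max (τ - x.2) 0 ^ 3 := by
  unfold herringbone
  split_ifs with h
  · rw [max_eq_right (by linarith)]; ring
  · rw [max_eq_left (by linarith)]; linear_combination -hgap x

theorem diagConcaveOn_herringbone (hk : 0 ≤ k)
    (hgap : ∀ x, upperRib ε τ fp A x - lowerRib ε τ fm A x = -k * (x.2 - τ) ^ 3) :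
    DiagConcaveOn (strip ε) (herringbone ε τ fp fm A) := by
  refine diagConcaveOn_strip_iff.2 fun c => ⟨?_, ?_⟩
  · refine ((((convexOn_max_affine_zero_pow 1 (-τ) 3).smul hk).concaveOn_affine_sub
      ((ε * A (c + τ) + τ * fm (c - ε)) / (ε + τ)) ((A (c + τ) - fm (c - ε)) / (ε + τ))).subset
      (subset_univ _) (convex_Icc _ _)).congr fun t _ => ?_
    rw [herringbone_eq_lowerRib_sub hgap, lowerRib]
    simp only [add_sub_cancel_right, smul_eq_mul, one_mul, ← sub_eq_add_neg]
    ring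
  · refine ((((convexOn_max_affine_zero_pow (-1) τ 3).smul hk).concaveOn_affine_sub
      ((ε * A (c - τ) - τ * fp (c - ε)) / (ε - τ)) ((fp (c - ε) - A (c - τ)) / (ε - τ))).subset
      (subset_univ _) (convex_Icc _ _)).congr fun t _ => ?_
    rw [herringbone_eq_upperRib_sub hgap, upperRib]
    simp only [sub_add_cancel, smul_eq_mul, neg_one_mul, neg_add_eq_sub]
    ring

theorem herringbone_top (hτ : τ < ε) (x₁ : ℝ) : herringbone ε τ fp fm A (x₁, ε) = fp x₁ := by
  have : ε - τ ≠ 0 := by linarith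
  simp only [herringbone, upperRib, if_pos hτ.le, sub_self, zero_mul, zero_add,
    add_sub_cancel_right]
  field_simp

theorem herringbone_bottom (hτ : -ε < τ) (x₁ : ℝ) :
    herringbone ε τ fp fm A (x₁, -ε) = fm x₁ := by
  have : ε + τ ≠ 0 := by linarith
  simp only [herringbone, lowerRib, if_neg (not_le.2 hτ), add_neg_cancel, zero_mul, zero_add,
    sub_neg_eq_add, add_sub_cancel_right, add_comm τ ε]
  field_simp

theorem herringbone_le_of_spine_le {H : ℝ × ℝ → ℝ} (hτ₁ : -ε < τ) (hτ₂ : τ < ε)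
    (hH : DiagConcaveOn (strip ε) H) (htop : ∀ x₁, H (x₁, ε) = fp x₁)
    (hbot : ∀ x₁, H (x₁, -ε) = fm x₁) (hA : ∀ u, A u ≤ H (u, τ)) :
    ∀ x ∈ strip ε, herringbone ε τ fp fm A x ≤ H x := by
  rintro ⟨x₁, x₂⟩ ⟨hx₁, hx₂⟩
  unfold herringbone
  split_ifs with h
  · have chord := hH.sub_mul_add_sub_mul_le_of_add_eq (p := (x₁ + x₂ - τ, τ))
      (q := (x₁ + x₂ - ε, ε)) (r := (x₁, x₂)) (mk_mem_strip.2 ⟨hτ₁.le, hτ₂.le⟩)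
      (mk_mem_strip.2 ⟨by linarith, le_rfl⟩) (by dsimp only; ring) (by dsimp only; ring) h hx₂
    simp only [htop] at chord
    rw [upperRib, div_le_iff₀ (by linarith)]
    nlinarith [mul_le_mul_of_nonneg_left (hA (x₁ + x₂ - τ)) (sub_nonneg.2 hx₂)]
  · have chord := hH.sub_mul_add_sub_mul_le_of_sub_eq (p := (x₁ - x₂ - ε, -ε))
      (q := (x₁ - x₂ + τ, τ)) (r := (x₁, x₂)) (mk_mem_strip.2 ⟨le_rfl, by linarith⟩)
      (mk_mem_strip.2 ⟨hτ₁.le, hτ₂.le⟩) (by dsimp only; ring) (by dsimp only; ring) hx₁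
      (by linarith)
    simp only [hbot] at chord
    rw [lowerRib, div_le_iff₀ (by linarith)]
    nlinarith [mul_le_mul_of_nonneg_left (hA (x₁ - x₂ + τ)) (by linarith : 0 ≤ ε + x₂)]

end Herringbone

section SpineChords

variable {ε τ : ℝ} {fp fm : ℝ → ℝ} {H : ℝ × ℝ → ℝ}

theorem DiagConcaveOn.spine_chord (hH : DiagConcaveOn (strip ε) H)
    (htop : ∀ x₁, H (x₁, ε) = fp x₁) (hbot : ∀ x₁, H (x₁, -ε) = fm x₁) (hτ₁ : -ε ≤ τ)
    (hτ₂ : τ ≤ ε) (u : ℝ) :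
    (ε - τ) * fm (u - τ - ε) + (ε + τ) * fp (u - τ + ε) ≤ 2 * ε * H (u, τ) := by
  have chord := hH.sub_mul_add_sub_mul_le_of_sub_eq (p := (u - τ - ε, -ε))
    (q := (u - τ + ε, ε)) (r := (u, τ)) (mk_mem_strip.2 ⟨le_rfl, by linarith⟩)
    (mk_mem_strip.2 ⟨by linarith, le_rfl⟩) (by dsimp only; ring) (by dsimp only; ring) hτ₁ hτ₂
  simp only [htop, hbot] at chord
  linarith

theorem DiagConcaveOn.spine_two_chords (hH : DiagConcaveOn (strip ε) H)
    (htop : ∀ x₁, H (x₁, ε) = fp x₁) (hbot : ∀ x₁, H (x₁, -ε) = fm x₁) (hτ : -ε ≤ τ)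
    {t : ℝ} (ht₀ : 0 ≤ t) (ht : τ + t ≤ ε) (u : ℝ) :
    (ε - τ) * t * fm (u - τ - ε) + (ε + τ) * t * fp (u + 2 * t + τ - ε)
      + (ε + τ) * (ε - τ - t) * H (u + 2 * t, τ) ≤ (ε + τ + t) * (ε - τ) * H (u, τ) := by
  have down := hH.sub_mul_add_sub_mul_le_of_sub_eq (p := (u - τ - ε, -ε))
    (q := (u + t, τ + t)) (r := (u, τ)) (mk_mem_strip.2 ⟨le_rfl, by linarith⟩)
    (mk_mem_strip.2 ⟨by linarith, ht⟩) (by dsimp only; ring) (by dsimp only; ring) hτ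
    (by simpa using ht₀)
  have up := hH.sub_mul_add_sub_mul_le_of_add_eq (p := (u + 2 * t, τ))
    (q := (u + 2 * t + τ - ε, ε)) (r := (u + t, τ + t)) (mk_mem_strip.2 ⟨hτ, by linarith⟩)
    (mk_mem_strip.2 ⟨by linarith, le_rfl⟩) (by dsimp only; ring) (by dsimp only; ring)
    (by simpa using ht₀) ht
  simp only [htop, hbot] at down up
  nlinarith [mul_le_mul_of_nonneg_left down (by linarith : 0 ≤ ε - τ),
    mul_le_mul_of_nonneg_left up (by linarith : 0 ≤ ε + τ)]

end SpineChords

theorem le_of_forall_exists_mul_le_mul_add {ι : Type*} [Nonempty ι] {D : ι → ℝ}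
    (hD : BddAbove (range D)) {p q e : ℝ} (hq : 0 ≤ q) (hqp : q < p)
    (h : ∀ i, ∃ j, p * D i ≤ q * D j + (p - q) * e) (i : ι) : D i ≤ e := by
  have hp : 0 < p := hq.trans_lt hqp
  have hsup : p * iSup D ≤ q * iSup D + (p - q) * e := by
    rw [← le_div_iff₀' hp]
    refine ciSup_le fun i => ?_
    obtain ⟨j, hj⟩ := h i
    rw [le_div_iff₀' hp]
    exact hj.trans (add_le_add (mul_le_mul_of_nonneg_left (le_ciSup hD j) hq) le_rfl)
  exact (le_ciSup hD i).trans (le_of_mul_le_mul_left (by linarith) (sub_pos.2 hqp))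

theorem nonpos_of_forall_le_mul_sq {x K δ : ℝ} (hδ : 0 < δ) (h : ∀ t ∈ Ioo 0 δ, x ≤ K * t ^ 2) :
    x ≤ 0 := by
  have hcont : Continuous fun t : ℝ => K * t ^ 2 := by fun_prop
  have hlim : Filter.Tendsto (fun t : ℝ => K * t ^ 2) (nhdsWithin 0 (Ioi 0)) (nhds 0) :=
    (hcont.tendsto' 0 0 (by simp)).mono_left nhdsWithin_le_nhds
  exact ge_of_tendsto hlim (Filter.eventually_of_mem (Ioo_mem_nhdsGT hδ) h)

theorem hasDerivAt_cubic (a₃ a₂ a₁ a₀ x : ℝ) :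
    HasDerivAt (cubic a₃ a₂ a₁ a₀) (3 * a₃ * x ^ 2 + 2 * a₂ * x + a₁) x :=
  (((((hasDerivAt_pow 3 x).const_mul a₃).add ((hasDerivAt_pow 2 x).const_mul a₂)).add
    ((hasDerivAt_id x).const_mul a₁)).add_const a₀).congr_deriv (by norm_num; ring)

def herringboneSpine (ε τ : ℝ) (fp fm : ℝ → ℝ) (u : ℝ) : ℝ :=
  ((ε ^ 2 - τ ^ 2) / (2 * ε * τ)) *
      ((ε + τ) * deriv fp (u + τ - ε) - (ε - τ) * deriv fm (u - τ - ε)) +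
    ((ε + τ) * fp (u + τ - ε) + (ε - τ) * fm (u - τ - ε)) / (2 * ε)

section CubicData

variable {a₃ a₂ a1p a1m a0p a0m ε τ : ℝ}

local notation "f₊" => cubic a₃ a₂ a1p a0p
local notation "f₋" => cubic a₃ a₂ a1m a0m
local notation "A" => herringboneSpine ε τ f₊ f₋

theorem herringboneSpine_cubic (hε : ε ≠ 0) (hτ : τ ≠ 0) (h : a1p - a1m = 12 * a₃ * (ε * τ))
    (u : ℝ) :
    A u = a₃ * u ^ 3 + a₂ * u ^ 2 + (a1m + 3 * a₃ * (ε + τ) ^ 2) * u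
      + ((a0p + a0m) / 2 + (a0p - a0m) * τ / (2 * ε) + a₂ * (ε ^ 2 - τ ^ 2)
         + 2 * a₃ * (ε ^ 4 - τ ^ 4) / ε) := by
  obtain rfl : a1p = a1m + 12 * a₃ * (ε * τ) := by linarith
  simp only [herringboneSpine, (hasDerivAt_cubic _ _ _ _ _).deriv, cubic]
  field_simp
  ring

theorem upperRib_sub_lowerRib_cubic (hε : ε ≠ 0) (hτ : τ ≠ 0)
    (h : a1p - a1m = 12 * a₃ * (ε * τ)) (hετ₁ : ε - τ ≠ 0) (hετ₂ : ε + τ ≠ 0) (x : ℝ × ℝ) :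
    upperRib ε τ f₊ A x - lowerRib ε τ f₋ A x = -(4 * a₃) * (x.2 - τ) ^ 3 := by
  simp only [upperRib, lowerRib, herringboneSpine_cubic hε hτ h]
  obtain rfl : a1p = a1m + 12 * a₃ * (ε * τ) := by linarith
  simp only [cubic]
  field_simp
  ring

theorem cubic_spine_chord_eq (hε : ε ≠ 0) (hτ : τ ≠ 0) (h : a1p - a1m = 12 * a₃ * (ε * τ))
    (u : ℝ) :
    (ε - τ) * f₋ (u - τ - ε) + (ε + τ) * f₊ (u - τ + ε)
      = 2 * ε * A u - 4 * a₃ * (ε - τ) ^ 3 * (ε + τ) := by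
  simp only [herringboneSpine_cubic hε hτ h]
  obtain rfl : a1p = a1m + 12 * a₃ * (ε * τ) := by linarith
  simp only [cubic]
  field_simp
  ring

theorem cubic_spine_two_chords_eq (hε : ε ≠ 0) (hτ : τ ≠ 0)
    (h : a1p - a1m = 12 * a₃ * (ε * τ)) (u t : ℝ) :
    (ε - τ) * t * f₋ (u - τ - ε) + (ε + τ) * t * f₊ (u + 2 * t + τ - ε)
      + (ε + τ) * (ε - τ - t) * A (u + 2 * t) + 4 * a₃ * t ^ 3 * (ε + τ) * (ε - τ)
      = (ε + τ + t) * (ε - τ) * A u := by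
  simp only [herringboneSpine_cubic hε hτ h]
  obtain rfl : a1p = a1m + 12 * a₃ * (ε * τ) := by linarith
  simp only [cubic]
  field_simp
  ring

theorem herringboneSpine_cubic_le {H : ℝ × ℝ → ℝ} (hH : DiagConcaveOn (strip ε) H)
    (htop : ∀ x₁, H (x₁, ε) = f₊ x₁) (hbot : ∀ x₁, H (x₁, -ε) = f₋ x₁) (hτ₀ : 0 < τ)
    (hτε : τ < ε) (h : a1p - a1m = 12 * a₃ * (ε * τ)) (u : ℝ) : A u ≤ H (u, τ) := by
  have hε : 0 < ε := hτ₀.trans hτε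
  set D : ℝ → ℝ := fun v => A v - H (v, τ)
  have hbdd : BddAbove (range D) := by
    refine ⟨2 * a₃ * (ε - τ) ^ 3 * (ε + τ) / ε, forall_mem_range.2 fun v => ?_⟩
    have := hH.spine_chord htop hbot (by linarith) hτε.le v
    rw [cubic_spine_chord_eq hε.ne' hτ₀.ne' h] at this
    rw [le_div_iff₀ hε]
    linarith
  set K := 2 * a₃ * (ε + τ) * (ε - τ) / ε
  have hsmall : ∀ t ∈ Ioo 0 (ε - τ), D u ≤ K * t ^ 2 := by
    rintro t ⟨ht₀, ht⟩
    refine le_of_forall_exists_mul_le_mul_add hbdd (q := (ε + τ) * (ε - τ - t))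
      (p := (ε + τ + t) * (ε - τ)) (by nlinarith) (by nlinarith) (fun v => ⟨v + 2 * t, ?_⟩) u
    have := hH.spine_two_chords htop hbot (τ := τ) (by linarith) ht₀.le (by linarith) v
    rw [← sub_nonneg] at this
    have hK : ((ε + τ + t) * (ε - τ) - (ε + τ) * (ε - τ - t)) * (K * t ^ 2)
        = 4 * a₃ * t ^ 3 * (ε + τ) * (ε - τ) := by
      simp only [K]; field_simp; ring
    rw [hK]
    linarith [cubic_spine_two_chords_eq (a₂ := a₂) (a0p := a0p) (a0m := a0m) hε.ne' hτ₀.ne' h v t]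
  linarith [nonpos_of_forall_le_mul_sq (by linarith) hsmall]

end CubicData

/-- For cubic boundary data with equal leading and quadratic coefficients, `a₃ > 0`,
`a₁⁺ > a₁⁻` and `ε > ε₀`, the left-herringbone candidate with horizontal spine
`x₂ = τ = ε₀²/ε` is the minimal diagonally concave function with boundary values `f₊, f₋`. -/
theorem cubic_large_eps_bellman
    (a₃ a₂ a1p a1m a0p a0m : ℝ) (ha₃ : 0 < a₃) (ha₁ : a1m < a1p)
    (ε ε₀ τ : ℝ)
    (hε₀ : ε₀ = Real.sqrt ((a1p - a1m) / (12 * a₃)))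
    (hεbig : ε₀ < ε)
    (hτ : τ = ε₀ ^ 2 / ε)
    (fp fm : ℝ → ℝ)
    (hfp : fp = cubic a₃ a₂ a1p a0p) (hfm : fm = cubic a₃ a₂ a1m a0m)
    (A : ℝ → ℝ)
    (hA : ∀ u : ℝ, A u =
      ((ε ^ 2 - τ ^ 2) / (2 * ε * τ)) *
        ((ε + τ) * deriv fp (u + τ - ε) - (ε - τ) * deriv fm (u - τ - ε)) +
      ((ε + τ) * fp (u + τ - ε) + (ε - τ) * fm (u - τ - ε)) / (2 * ε))
    (B : ℝ × ℝ → ℝ)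
    (hB : ∀ x : ℝ × ℝ, B x =
      if τ ≤ x.2 then
        ((ε - x.2) * A (x.1 + x.2 - τ) + (x.2 - τ) * fp (x.1 + x.2 - ε)) / (ε - τ)
      else
        ((ε + x.2) * A (x.1 - x.2 + τ) + (τ - x.2) * fm (x.1 - x.2 - ε)) / (ε + τ)) :
    DiagConcaveOn (strip ε) B ∧
    (∀ x₁ : ℝ, B (x₁, ε) = fp x₁ ∧ B (x₁, -ε) = fm x₁) ∧
    (∀ H : ℝ × ℝ → ℝ, DiagConcaveOn (strip ε) H →
      (∀ x₁ : ℝ, H (x₁, ε) = fp x₁ ∧ H (x₁, -ε) = fm x₁) →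
      ∀ x ∈ strip ε, B x ≤ H x) := by
  have hδ : 0 < (a1p - a1m) / (12 * a₃) := div_pos (by linarith) (by linarith)
  have hε₀sq : ε₀ ^ 2 = (a1p - a1m) / (12 * a₃) := by rw [hε₀, Real.sq_sqrt hδ.le]
  have hε₀pos : 0 < ε₀ := hε₀ ▸ Real.sqrt_pos.2 hδ
  have hε : 0 < ε := hε₀pos.trans hεbig
  have hτ₀ : 0 < τ := hτ ▸ by positivity
  have hτε : τ < ε := by rw [hτ, div_lt_iff₀ hε]; nlinarith
  have hgap : a1p - a1m = 12 * a₃ * (ε * τ) := by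
    rw [hτ, mul_div_cancel₀ _ hε.ne', hε₀sq]; field_simp
  subst hfp hfm
  obtain rfl : A = herringboneSpine ε τ _ _ := funext hA
  obtain rfl : B = herringbone ε τ _ _ _ := funext hB
  refine ⟨diagConcaveOn_herringbone (by positivity)
      (upperRib_sub_lowerRib_cubic hε.ne' hτ₀.ne' hgap (by linarith) (by linarith)),
    fun x₁ => ⟨herringbone_top hτε x₁, herringbone_bottom (by linarith) x₁⟩,
    fun H hH hHbd => ?_⟩
  have htop : ∀ x₁, H (x₁, ε) = _ := fun x₁ => (hHbd x₁).1
  have hbot : ∀ x₁, H (x₁, -ε) = _ := fun x₁ => (hHbd x₁).2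
  exact herringbone_le_of_spine_le (by linarith) hτε hH htop hbot
    (herringboneSpine_cubic_le hH htop hbot hτ₀ hτε hgap)
end
end

section
/- For every real s > 1, the 2×2 matrix M(s) = [[1, 1−3s], [−1, −1+s]] has eigenvalues λ± = (s ± √(s²+8s))/2, and the eigenvector corresponding to λ₋ = (s − √(s²+8s))/2 is proportional to (s−1−λ₋, 1), whose slope 1/(s−1−λ₋) = 2/(s−2+√(s²+8s)) lies strictly between 0 and 1. Moreover, for every s > 1 this slope satisfies the strict inequality 2/(s−2+√(s²+8s)) > 1/(2s−1). -/
/-!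
With `r = √(s² + 8s)`, both eigenvalues are roots `(s ± r)/2` of the characteristic polynomial
`λ² - sλ - 2s`, and an eigenvector `(x, 1)` is read off the second row of `M(s)`. For `s > 1` one
has `s + 2 < r < 3s`, which gives all three bounds on the slope `2/(s - 2 + r)`.
-/

-- The hypothesis is the characteristic equation `l² - tr M · l + det M = 0` of `M`.
theorem Matrix.mulVec_eq_smul_of_charpoly_eq_zero {R : Type*} [CommRing R] (a b d l : R)
    (hl : l ^ 2 - (a + d) * l + (a * d + b) = 0) :
    (!![a, b; -1, d]).mulVec ![d - l, 1] = l • ![d - l, 1] := by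
  ext i
  fin_cases i
  · simp only [Matrix.mulVec, dotProduct, Fin.zero_eta, Fin.isValue, Matrix.of_apply,
      Matrix.cons_val', Matrix.cons_val_fin_one, Matrix.cons_val_zero, Fin.sum_univ_two,
      Matrix.cons_val_one, mul_one, Pi.smul_apply, smul_eq_mul]
    linear_combination hl
  · simp [Matrix.mulVec, dotProduct, Fin.sum_univ_two]

theorem vecCons_one_ne_zero {α : Type*} [Zero α] [One α] [NeZero (1 : α)] (x : α) :
    ![x, 1] ≠ 0 :=
  fun h => one_ne_zero (congrFun h 1)

-- Both eigenvalues: take `r = ±√(s² + 8s)`.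
theorem saddle_charpoly_eq_zero (s r : ℝ) (hr : r ^ 2 = s ^ 2 + 8 * s) :
    ((s + r) / 2) ^ 2 - (1 + (-1 + s)) * ((s + r) / 2) + (1 * (-1 + s) + (1 - 3 * s)) = 0 := by
  linear_combination hr / 4

section Bounds

variable {s : ℝ}

theorem add_two_lt_sqrt_sq_add_eight_mul (hs : 1 < s) : s + 2 < √(s ^ 2 + 8 * s) :=
  Real.lt_sqrt_of_sq_lt (by nlinarith)

theorem sqrt_sq_add_eight_mul_lt (hs : 1 < s) : √(s ^ 2 + 8 * s) < 3 * s :=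
  (Real.sqrt_lt' (by linarith)).2 (by nlinarith)

theorem separatrix_slope_bounds (hs : 1 < s) :
    0 < 2 / (s - 2 + √(s ^ 2 + 8 * s)) ∧ 2 / (s - 2 + √(s ^ 2 + 8 * s)) < 1 ∧
      1 / (2 * s - 1) < 2 / (s - 2 + √(s ^ 2 + 8 * s)) := by
  have hlow := add_two_lt_sqrt_sq_add_eight_mul hs
  have hden : 2 < s - 2 + √(s ^ 2 + 8 * s) := by linarith
  refine ⟨by positivity, (div_lt_one (by linarith)).2 hden, ?_⟩
  rw [div_lt_div_iff₀ (by linarith) (by linarith)]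
  linarith [sqrt_sq_add_eight_mul_lt hs]

end Bounds

/-- Eigenvalue/eigenvector analysis of the saddle matrix `M(s) = [[1, 1-3s], [-1, -1+s]]`
for `s > 1`: the eigenvalues are `λ± = (s ± √(s²+8s))/2`; the eigenvector for `λ₋` is
`(s-1-λ₋, 1)`, whose slope `1/(s-1-λ₋) = 2/(s-2+√(s²+8s))` lies strictly in `(0,1)` and is
strictly greater than `1/(2s-1)`. -/
theorem saddle_matrix_eigen (s : ℝ) (hs : 1 < s) (lm lp : ℝ)
    (hlm : lm = (s - Real.sqrt (s ^ 2 + 8 * s)) / 2)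
    (hlp : lp = (s + Real.sqrt (s ^ 2 + 8 * s)) / 2) :
    (!![(1 : ℝ), 1 - 3 * s; -1, -1 + s]).mulVec ![s - 1 - lm, 1] =
      lm • ![s - 1 - lm, 1] ∧
    (![s - 1 - lm, (1 : ℝ)] ≠ 0) ∧
    (∃ v : Fin 2 → ℝ, v ≠ 0 ∧
      (!![(1 : ℝ), 1 - 3 * s; -1, -1 + s]).mulVec v = lp • v) ∧
    1 / (s - 1 - lm) = 2 / (s - 2 + Real.sqrt (s ^ 2 + 8 * s)) ∧
    0 < 2 / (s - 2 + Real.sqrt (s ^ 2 + 8 * s)) ∧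
    2 / (s - 2 + Real.sqrt (s ^ 2 + 8 * s)) < 1 ∧
    1 / (2 * s - 1) < 2 / (s - 2 + Real.sqrt (s ^ 2 + 8 * s)) := by
  have hr : √(s ^ 2 + 8 * s) ^ 2 = s ^ 2 + 8 * s := Real.sq_sqrt (by positivity)
  have hm : (!![(1 : ℝ), 1 - 3 * s; -1, -1 + s]).mulVec ![-1 + s - lm, 1] =
      lm • ![-1 + s - lm, 1] := by
    refine Matrix.mulVec_eq_smul_of_charpoly_eq_zero _ _ _ _ ?_
    rw [hlm, sub_eq_add_neg s]
    exact saddle_charpoly_eq_zero s _ (by rw [neg_sq, hr])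
  have hp : (!![(1 : ℝ), 1 - 3 * s; -1, -1 + s]).mulVec ![-1 + s - lp, 1] =
      lp • ![-1 + s - lp, 1] :=
    Matrix.mulVec_eq_smul_of_charpoly_eq_zero _ _ _ _ (hlp ▸ saddle_charpoly_eq_zero s _ hr)
  have hslope : s - 1 - lm = (s - 2 + √(s ^ 2 + 8 * s)) / 2 := by rw [hlm]; ring
  rw [show -1 + s - lm = s - 1 - lm by ring] at hm
  refine ⟨hm, vecCons_one_ne_zero _, ⟨_, vecCons_one_ne_zero _, hp⟩, ?_,
    separatrix_slope_bounds hs⟩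
  rw [hslope, one_div_div]
end
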